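/- arXiv:0804.1495 — 8 statements merged into one kernel-verified Lean document; each statement's English description precedes it below -/
import Mathlib

section
/- Let R, S, T, U be integral domains with inclusions R ⊆ S, R ⊆ T, S ⊆ U, T ⊆ U forming a commuting square, such that the intersection S ∩ T inside U equals R. Let M be a finite locally free (equivalently, finite projective) R-module. Then the intersection of M ⊗_R S and M ⊗_R T inside M ⊗_R U equals M (i.e., equals the image of M in M ⊗_R U). -/
open TensorProduct

/-- Lemma (`L:proj-intersect0`): given a commuting square of inclusions of integral
domains `R ⊆ S, T ⊆ U` such that `S ∩ T = R` inside `U`, and a finite locally free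
(= finite projective) `R`-module `M`, the intersection of `M ⊗_R S` and `M ⊗_R T`
inside `M ⊗_R U` equals (the image of) `M`. -/
theorem tensor_intersection_of_domains
    (R S T U : Type*) [CommRing R] [CommRing S] [CommRing T] [CommRing U]
    [IsDomain R] [IsDomain S] [IsDomain T] [IsDomain U]
    [Algebra R S] [Algebra R T] [Algebra S U] [Algebra T U] [Algebra R U]
    [IsScalarTower R S U] [IsScalarTower R T U]
    (hS : Function.Injective (algebraMap R S))
    (hT : Function.Injective (algebraMap R T))
    (hSU : Function.Injective (algebraMap S U))
    (hTU : Function.Injective (algebraMap T U))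
    (hcap : ∀ u : U, u ∈ (algebraMap S U).range → u ∈ (algebraMap T U).range →
      u ∈ (algebraMap R U).range)
    (M : Type*) [AddCommGroup M] [Module R M]
    [Module.Finite R M] [Module.Projective R M] :
    LinearMap.range
        (TensorProduct.map (LinearMap.id : M →ₗ[R] M)
          ((Algebra.linearMap S U).restrictScalars R)) ⊓
      LinearMap.range
        (TensorProduct.map (LinearMap.id : M →ₗ[R] M)
          ((Algebra.linearMap T U).restrictScalars R)) =
    LinearMap.range ((TensorProduct.mk R M U).flip 1) := by
  obtain ⟨n, π, σ, hsurj, hinj, hπσ⟩ := Module.Finite.exists_comp_eq_id_of_projective R M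
  -- dual basis data
  set f : Fin n → (M →ₗ[R] R) := fun i => (LinearMap.proj i) ∘ₗ σ with hf
  set x : Fin n → M := fun i => π (Pi.single i 1) with hx
  have hdual : ∀ m : M, (∑ i, f i m • x i) = m := by
    intro m
    have : π (σ m) = m := by
      have := LinearMap.congr_fun hπσ m
      simpa using this
    calc (∑ i, f i m • x i)
        = ∑ i, π (σ m i • (Pi.single i 1 : Fin n → R)) := by
          refine Finset.sum_congr rfl fun i _ => ?_
          rw [map_smul]; rfl
      _ = π (∑ i, σ m i • (Pi.single i 1 : Fin n → R)) := by rw [map_sum]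
      _ = π (σ m) := by
          congr 1
          ext j
          simp [Pi.single_apply, Finset.sum_apply, eq_comm]
      _ = m := this
  -- the "coefficient" maps g i : M ⊗ U →ₗ U
  set g : Fin n → (M ⊗[R] U →ₗ[R] U) :=
    fun i => (TensorProduct.lid R U).toLinearMap ∘ₗ LinearMap.rTensor U (f i) with hg
  have hg_tmul : ∀ (i : Fin n) (m : M) (u : U), g i (m ⊗ₜ[R] u) = f i m • u := by
    intro i m u; simp [hg]
  -- reconstruction: z = ∑ i, x i ⊗ g i z
  have hrecon : ∀ z : M ⊗[R] U, z = ∑ i, x i ⊗ₜ[R] g i z := by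
    intro z
    induction z using TensorProduct.induction_on with
    | zero => simp
    | tmul m u =>
        have : (∑ i, x i ⊗ₜ[R] (f i m • u)) = m ⊗ₜ[R] u := by
          calc (∑ i, x i ⊗ₜ[R] (f i m • u)) = ∑ i, (f i m • x i) ⊗ₜ[R] u := by
                simp [TensorProduct.smul_tmul]
            _ = (∑ i, f i m • x i) ⊗ₜ[R] u := by rw [TensorProduct.sum_tmul]
            _ = m ⊗ₜ[R] u := by rw [hdual]
        simp only [hg_tmul]
        exact this.symm
    | add a b ha hb =>
        calc a + b = (∑ i, x i ⊗ₜ[R] g i a) + ∑ i, x i ⊗ₜ[R] g i b := by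
              rw [← ha, ← hb]
          _ = ∑ i, (x i ⊗ₜ[R] g i a + x i ⊗ₜ[R] g i b) := Finset.sum_add_distrib.symm
          _ = ∑ i, x i ⊗ₜ[R] g i (a + b) := by
              simp [map_add, TensorProduct.tmul_add]
  apply le_antisymm
  · rintro z ⟨⟨a, ha⟩, ⟨b, hb⟩⟩
    -- each coefficient lies in the image of S and of T, hence of R
    have hSmem : ∀ i, g i z ∈ (algebraMap S U).range := by
      intro i
      rw [← ha]; clear ha hb
      induction a using TensorProduct.induction_on with
      | zero => exact ⟨0, by simp⟩
      | tmul m s =>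
          refine ⟨algebraMap R S (f i m) * s, ?_⟩
          simp [hg_tmul, Algebra.smul_def, map_mul, ← IsScalarTower.algebraMap_apply]
      | add a b ha' hb' =>
          rw [map_add, map_add]
          exact Subring.add_mem _ ha' hb'
    have hTmem : ∀ i, g i z ∈ (algebraMap T U).range := by
      intro i
      rw [← hb]; clear ha hb
      induction b using TensorProduct.induction_on with
      | zero => exact ⟨0, by simp⟩
      | tmul m t =>
          refine ⟨algebraMap R T (f i m) * t, ?_⟩
          simp [hg_tmul, Algebra.smul_def, map_mul, ← IsScalarTower.algebraMap_apply]
      | add a b ha' hb' =>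
          rw [map_add, map_add]
          exact Subring.add_mem _ ha' hb'
    have hR : ∀ i, ∃ r : R, algebraMap R U r = g i z :=
      fun i => hcap _ (hSmem i) (hTmem i)
    choose r hr using hR
    refine ⟨∑ i, r i • x i, ?_⟩
    have : ((TensorProduct.mk R M U).flip 1) (∑ i, r i • x i)
        = ∑ i, x i ⊗ₜ[R] g i z := by
      simp only [TensorProduct.mk_apply, LinearMap.flip_apply]
      rw [TensorProduct.sum_tmul]
      refine Finset.sum_congr rfl fun i _ => ?_
      rw [← hr i, Algebra.algebraMap_eq_smul_one]
      rw [TensorProduct.smul_tmul]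
    rw [this, ← hrecon z]
  · rintro z ⟨m, hm⟩
    constructor
    · refine ⟨m ⊗ₜ[R] (1 : S), ?_⟩
      simpa using hm
    · refine ⟨m ⊗ₜ[R] (1 : T), ?_⟩
      simpa using hm
end

section
/- Let C ⊆ ℝⁿ be a convex set and f : C → ℝ a convex function. Suppose λ : ℝⁿ → ℝ is an affine functional that agrees with f on a subset of C having nonempty interior in ℝⁿ. Then f(x) ≥ λ(x) for all x ∈ C. -/
/-- An affine functional on `ℝⁿ`: `λ x = a · x + b`. -/
def IsAffineFunctional (n : ℕ) (lam : (Fin n → ℝ) → ℝ) : Prop :=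
  ∃ (a : Fin n → ℝ) (b : ℝ), ∀ x, lam x = (∑ i, a i * x i) + b

lemma affine_comb (n : ℕ) (lam : (Fin n → ℝ) → ℝ) (hlam : IsAffineFunctional n lam)
    (z x : Fin n → ℝ) (t s : ℝ) (hts : t + s = 1) :
    lam (t • z + s • x) = t * lam z + s * lam x := by
  obtain ⟨a, b, hab⟩ := hlam
  rw [hab, hab, hab]
  have h : ∑ i, a i * (t • z + s • x) i
      = t * (∑ i, a i * z i) + s * (∑ i, a i * x i) := by
    rw [Finset.mul_sum, Finset.mul_sum, ← Finset.sum_add_distrib]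
    refine Finset.sum_congr rfl fun i _ => ?_
    simp [Pi.add_apply, Pi.smul_apply, smul_eq_mul]
    ring
  rw [h]
  linear_combination (-b) * hts

/-- Lemma (Lemma `L:slopes`(a)): if a convex function `f` on a convex set `C ⊆ ℝⁿ`
agrees with an affine functional `lam` on a subset of `C` with nonempty interior,
then `f ≥ lam` on all of `C`. -/
theorem convex_ge_affine_of_agree_on_interior
    (n : ℕ) (C : Set (Fin n → ℝ)) (hC : Convex ℝ C)
    (f : (Fin n → ℝ) → ℝ) (hf : ConvexOn ℝ C f)
    (lam : (Fin n → ℝ) → ℝ) (hlam : IsAffineFunctional n lam)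
    (U : Set (Fin n → ℝ)) (hUC : U ⊆ C) (hUint : (interior U).Nonempty)
    (hagree : ∀ x ∈ U, f x = lam x) :
    ∀ x ∈ C, lam x ≤ f x := by
  obtain ⟨x₀, hx₀⟩ := hUint
  obtain ⟨r, hr, hball⟩ := Metric.isOpen_iff.mp isOpen_interior x₀ hx₀
  intro x hx
  set d : ℝ := dist x₀ x with hd
  have hdnn : 0 ≤ d := dist_nonneg
  set ε : ℝ := r / (2 * (d + 1)) with hε
  have hεpos : 0 < ε := by positivity
  -- z = (1+ε) x₀ - ε x
  set z : Fin n → ℝ := x₀ + ε • (x₀ - x) with hz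
  have hzball : z ∈ Metric.ball x₀ r := by
    rw [Metric.mem_ball, dist_eq_norm]
    have : z - x₀ = ε • (x₀ - x) := by rw [hz]; abel
    rw [this, norm_smul, Real.norm_eq_abs, abs_of_pos hεpos]
    have hnorm : ‖x₀ - x‖ = d := by rw [hd, dist_eq_norm]
    rw [hnorm]
    have h2 : ε * (d + 1) = r / 2 := by
      rw [hε]; field_simp
    nlinarith
  have hzU : z ∈ U := interior_subset (hball hzball)
  set t : ℝ := 1 / (1 + ε) with ht
  set s : ℝ := ε / (1 + ε) with hs
  have h1ε : (0:ℝ) < 1 + ε := by linarith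
  have hts : t + s = 1 := by rw [ht, hs]; field_simp
  have htpos : 0 < t := by positivity
  have hspos : 0 < s := by positivity
  have hcomb : t • z + s • x = x₀ := by
    funext i
    simp only [Pi.add_apply, Pi.smul_apply, hz, Pi.sub_apply, smul_eq_mul]
    rw [ht, hs]
    field_simp
    ring
  have hconv := hf.2 (hUC hzU) hx htpos.le hspos.le hts
  rw [hcomb] at hconv
  have haff := affine_comb n lam hlam z x t s hts
  rw [hcomb] at haff
  have hx₀U : x₀ ∈ U := interior_subset hx₀
  rw [hagree x₀ hx₀U, haff, hagree z hzU] at hconv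
  simp only [smul_eq_mul] at hconv
  -- t * lam z + s * lam x ≤ t * lam z + s * f x
  have : s * lam x ≤ s * f x := by linarith
  exact le_of_mul_le_mul_left (by linarith) hspos
end

section
/- Let K be a field complete for a nonarchimedean norm and let 0 < α ≤ β. Let x = Σ_{i∈ℤ} aᵢ tⁱ be a nonzero element of the ring of Laurent series convergent on the open annulus α < |t| < β (i.e., |aᵢ|ηⁱ → 0 as i → ±∞ for every η ∈ (α,β)). For r ∈ (−log β, −log α), set |x|_{e^{−r}} = sup_i |aᵢ| e^{−ri}. If the function r ↦ log|x|_{e^{−r}} is affine on (−log β, −log α), then x is a unit in this ring. -/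
open Filter

/-- A two-sided sequence of coefficients gives a Laurent series convergent on the
open annulus `α < |t| < β`: `|aᵢ| ηⁱ → 0` as `i → ±∞` for every `η ∈ (α, β)`. -/
def ConvergesOnOpenAnnulus {K : Type*} [NormedField K] (α β : ℝ) (a : ℤ → K) : Prop :=
  ∀ η ∈ Set.Ioo α β, Tendsto (fun i : ℤ => ‖a i‖ * η ^ i) (cocompact ℤ) (nhds 0)

/-- The product of two Laurent series (convolution of coefficients). -/
noncomputable def laurentMul {K : Type*} [NormedField K] (a b : ℤ → K) : ℤ → K :=
  fun i => ∑' j : ℤ, a j * b (i - j)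

/-- The `η`-Gauss norm `|x|_η = sup_i |aᵢ| ηⁱ` of a Laurent series. -/
noncomputable def gaussNormZ {K : Type*} [NormedField K] (a : ℤ → K) (η : ℝ) : ℝ :=
  ⨆ i : ℤ, ‖a i‖ * η ^ i

/-!
Write `r = -log η`. Each term `log (‖aᵢ‖ ηⁱ) = log ‖aᵢ‖ - i r` is affine in `r` and lies below
`log |x|_η`, which is affine by hypothesis. Let `aₙ tⁿ` be a term attaining the Gauss norm at one
interior radius: an affine function lying below another and touching it at an interior point
coincides with it, so `|x|_η = ‖aₙ‖ ηⁿ` throughout the annulus, and comparing with a slightly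
smaller or larger radius makes `aₙ tⁿ` strictly dominant. Hence `x = aₙ tⁿ (1 - w)` with
`|w|_η < 1` for every `η` (the terms of `w` tend to `0`, so the supremum is attained), and the
geometric series `∑ wᵏ` inverts `1 - w`: the Gauss norms are submultiplicative in the
ultrametric setting, so `|wᵏ|_η ≤ |w|_η ^ k`.
-/

open Set Topology

theorem Filter.Tendsto.exists_forall_ge_of_pos {ι : Type*} {f : ι → ℝ}
    (hf : Tendsto f cofinite (𝓝 0)) {i₀ : ι} (hi₀ : 0 < f i₀) : ∃ n, ∀ i, f i ≤ f n := by
  have hfin : {i | f i₀ ≤ f i}.Finite := by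
    simpa only [not_lt] using eventually_cofinite.mp (hf.eventually_lt_const hi₀)
  obtain ⟨n, -, hn⟩ := hfin.toFinset.exists_max_image f ⟨i₀, by simp⟩
  refine ⟨n, fun i => ?_⟩
  by_cases hi : f i₀ ≤ f i
  · exact hn i (by simpa using hi)
  · exact (not_le.1 hi).le.trans (hn i₀ (by simp))

theorem Filter.Tendsto.exists_le_lt_of_forall_lt {ι : Type*} {f : ι → ℝ}
    (hf : Tendsto f cofinite (𝓝 0)) {c : ℝ} (hc : 0 < c) (hlt : ∀ i, f i < c) :
    ∃ M, 0 ≤ M ∧ M < c ∧ ∀ i, f i ≤ M := by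
  by_cases hpos : ∃ i, 0 < f i
  · obtain ⟨i₀, hi₀⟩ := hpos
    obtain ⟨n, hn⟩ := hf.exists_forall_ge_of_pos hi₀
    exact ⟨f n, hi₀.le.trans (hn i₀), hlt n, hn⟩
  · push Not at hpos
    exact ⟨0, le_rfl, hc, hpos⟩

theorem tendsto_zpow_atTop_nhds_zero_of_lt_one {q : ℝ} (hq₀ : 0 < q) (hq₁ : q < 1) :
    Tendsto (fun i : ℤ => q ^ i) atTop (𝓝 0) := by
  refine ((tendsto_rpow_atTop_of_base_lt_one q (by linarith) hq₁).comp
    tendsto_intCast_atTop_atTop).congr fun i => ?_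
  simp [Real.rpow_intCast]

theorem tendsto_zpow_atBot_nhds_zero_of_one_lt {q : ℝ} (hq : 1 < q) :
    Tendsto (fun i : ℤ => q ^ i) atBot (𝓝 0) := by
  refine ((tendsto_rpow_atBot_of_base_gt_one q hq).comp
    (tendsto_intCast_atBot_iff.2 tendsto_id)).congr fun i => ?_
  simp [Real.rpow_intCast]

theorem exists_mem_Ioo_div_zpow_lt_one {α β η : ℝ} (hα : 0 < α) (hη : η ∈ Ioo α β)
    {k : ℤ} (hk : k ≠ 0) : ∃ η' ∈ Ioo α β, (η / η') ^ k < 1 := by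
  rcases hk.lt_or_gt with hk | hk
  · obtain ⟨η', hαη', hη'η⟩ := exists_between hη.1
    exact ⟨η', ⟨hαη', hη'η.trans hη.2⟩,
      zpow_lt_one_of_neg₀ ((one_lt_div (hα.trans hαη')).2 hη'η) hk⟩
  · obtain ⟨η', hηη', hη'β⟩ := exists_between hη.2
    have hη'pos : 0 < η' := hα.trans (hη.1.trans hηη')
    exact ⟨η', ⟨hη.1.trans hηη', hη'β⟩,
      zpow_lt_one₀ (div_pos (hα.trans hη.1) hη'pos) ((div_lt_one hη'pos).2 hηη') hk⟩

theorem mul_zpow_lt_of_forall_le {α β u v : ℝ} {i n : ℤ} (hα : 0 < α) (hv : 0 < v)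
    (hin : i ≠ n) (h : ∀ η ∈ Ioo α β, u * η ^ i ≤ v * η ^ n) :
    ∀ η ∈ Ioo α β, u * η ^ i < v * η ^ n := by
  intro η hη
  obtain ⟨η', hη', hlt⟩ := exists_mem_Ioo_div_zpow_lt_one hα hη (sub_ne_zero.2 hin)
  have hη'pos : 0 < η' := hα.trans hη'.1
  have hηpos : 0 < η := hα.trans hη.1
  calc u * η ^ i = u * η' ^ i * (η / η') ^ i := by
        rw [div_zpow]; field_simp
    _ ≤ v * η' ^ n * (η / η') ^ i := by gcongr ?_ * _; exact h η' hη'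
    _ = v * η ^ n * (η / η') ^ (i - n) := by
        rw [div_zpow, div_zpow, zpow_sub₀ hηpos.ne', zpow_sub₀ hη'pos.ne']; field_simp
    _ < v * η ^ n := mul_lt_of_lt_one_right (by positivity) hlt

theorem slope_eq_zero_of_nonneg_of_eq_zero {p q L U r₀ : ℝ} (hr₀ : r₀ ∈ Ioo L U)
    (hnn : ∀ r ∈ Ioo L U, 0 ≤ p * r + q) (h₀ : p * r₀ + q = 0) : p = 0 := by
  have h₁ := hnn ((L + r₀) / 2) ⟨by linarith [hr₀.1], by linarith [hr₀.1, hr₀.2]⟩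
  have h₂ := hnn ((r₀ + U) / 2) ⟨by linarith [hr₀.1, hr₀.2], by linarith [hr₀.2]⟩
  nlinarith [hr₀.1, hr₀.2]

theorem exp_neg_mem_Ioo {α β : ℝ} (hα : 0 < α) (hβ : 0 < β) {r : ℝ}
    (hr : r ∈ Ioo (-Real.log β) (-Real.log α)) : Real.exp (-r) ∈ Ioo α β := by
  constructor
  · rw [← Real.log_lt_iff_lt_exp hα]; linarith [hr.2]
  · rw [← Real.lt_log_iff_exp_lt hβ]; linarith [hr.1]

theorem neg_log_mem_Ioo {α β : ℝ} (hα : 0 < α) {η : ℝ} (hη : η ∈ Ioo α β) :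
    -Real.log η ∈ Ioo (-Real.log β) (-Real.log α) :=
  ⟨neg_lt_neg (Real.log_lt_log (hα.trans hη.1) hη.2), neg_lt_neg (Real.log_lt_log hα hη.1)⟩

theorem Real.log_mul_exp_neg_zpow {x : ℝ} (hx : 0 < x) (r : ℝ) (n : ℤ) :
    Real.log (x * Real.exp (-r) ^ n) = Real.log x - n * r := by
  rw [Real.log_mul hx.ne' (zpow_pos (Real.exp_pos _) n).ne', Real.log_zpow, Real.log_exp]
  ring

section GaussNorm

variable {K : Type*} [NormedField K] {α β : ℝ} {a : ℤ → K}

theorem convergesOnOpenAnnulus_iff :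
    ConvergesOnOpenAnnulus α β a ↔
      ∀ η ∈ Ioo α β, Tendsto (fun i : ℤ => ‖a i‖ * η ^ i) cofinite (𝓝 0) := by
  simp only [ConvergesOnOpenAnnulus, cocompact_eq_cofinite]

theorem le_gaussNormZ {η : ℝ} (h : Tendsto (fun i : ℤ => ‖a i‖ * η ^ i) cofinite (𝓝 0))
    (i : ℤ) : ‖a i‖ * η ^ i ≤ gaussNormZ a η :=
  le_ciSup h.bddAbove_range_of_cofinite i

theorem gaussNormZ_eq_of_forall_le {η : ℝ} {n : ℤ}
    (h : ∀ i, ‖a i‖ * η ^ i ≤ ‖a n‖ * η ^ n) : gaussNormZ a η = ‖a n‖ * η ^ n :=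
  le_antisymm (ciSup_le h) (le_ciSup ⟨_, forall_mem_range.2 h⟩ n)

end GaussNorm

section Dominant

variable {K : Type*} [NormedField K] {α β : ℝ} {a : ℤ → K}

theorem forall_mul_zpow_le_of_affine_log_gaussNormZ (hα : 0 < α) (hαβ : α < β)
    (ha : ConvergesOnOpenAnnulus α β a) {n : ℤ} (han : a n ≠ 0) {η₀ : ℝ}
    (hη₀ : η₀ ∈ Ioo α β) (hmax : ∀ i, ‖a i‖ * η₀ ^ i ≤ ‖a n‖ * η₀ ^ n)
    (haff : ∃ m c : ℝ, ∀ r ∈ Ioo (-Real.log β) (-Real.log α),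
        Real.log (gaussNormZ a (Real.exp (-r))) = m * r + c) :
    ∀ η ∈ Ioo α β, ∀ i, ‖a i‖ * η ^ i ≤ ‖a n‖ * η ^ n := by
  obtain ⟨m, c, hmc⟩ := haff
  have hten := convergesOnOpenAnnulus_iff.1 ha
  have han' : 0 < ‖a n‖ := norm_pos_iff.2 han
  have hbelow : ∀ r ∈ Ioo (-Real.log β) (-Real.log α), Real.log ‖a n‖ - n * r ≤ m * r + c := by
    intro r hr
    rw [← hmc r hr, ← Real.log_mul_exp_neg_zpow han']
    exact Real.log_le_log (by positivity)
      (le_gaussNormZ (hten _ (exp_neg_mem_Ioo hα (hα.trans hαβ) hr)) n)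
  have hr₀ := neg_log_mem_Ioo hα hη₀
  have htouch : Real.log ‖a n‖ - n * -Real.log η₀ = m * -Real.log η₀ + c := by
    rw [← hmc _ hr₀, ← Real.log_mul_exp_neg_zpow han', neg_neg, Real.exp_log (hα.trans hη₀.1),
      gaussNormZ_eq_of_forall_le hmax]
  obtain rfl : m = -n := by
    have := slope_eq_zero_of_nonneg_of_eq_zero hr₀ (p := m + n) (q := c - Real.log ‖a n‖)
      (fun r hr => by linarith [hbelow r hr]) (by linarith)
    linarith
  obtain rfl : c = Real.log ‖a n‖ := by linarith
  intro η hη i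
  have hηpos : 0 < η := hα.trans hη.1
  have hG : gaussNormZ a η = ‖a n‖ * η ^ n := by
    have h := hmc _ (neg_log_mem_Ioo hα hη)
    rw [neg_neg, Real.exp_log hηpos] at h
    refine Real.log_injOn_pos ((by positivity : 0 < ‖a n‖ * η ^ n).trans_le
      (le_gaussNormZ (hten η hη) n)) (by positivity : 0 < ‖a n‖ * η ^ n) ?_
    rw [h, Real.log_mul han'.ne' (zpow_pos hηpos n).ne', Real.log_zpow]
    ring
  exact hG ▸ le_gaussNormZ (hten η hη) i

theorem exists_dominant_term_of_affine_log_gaussNormZ (hα : 0 < α) (hαβ : α < β)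
    (ha : ConvergesOnOpenAnnulus α β a) (hne : a ≠ 0)
    (haff : ∃ m c : ℝ, ∀ r ∈ Ioo (-Real.log β) (-Real.log α),
        Real.log (gaussNormZ a (Real.exp (-r))) = m * r + c) :
    ∃ n, a n ≠ 0 ∧ ∀ η ∈ Ioo α β, ∀ i ≠ n, ‖a i‖ * η ^ i < ‖a n‖ * η ^ n := by
  have hη₀ : (α + β) / 2 ∈ Ioo α β := ⟨by linarith, by linarith⟩
  obtain ⟨i₀, hi₀⟩ := Function.ne_iff.1 hne
  have hpos := mul_pos (norm_pos_iff.2 hi₀) (zpow_pos (hα.trans hη₀.1) i₀)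
  obtain ⟨n, hn⟩ := (convergesOnOpenAnnulus_iff.1 ha _ hη₀).exists_forall_ge_of_pos hpos
  have han : a n ≠ 0 := fun h => hpos.not_ge (by simpa [h] using hn i₀)
  have hle := forall_mul_zpow_le_of_affine_log_gaussNormZ hα hαβ ha han hη₀ hn haff
  refine ⟨n, han, fun η hη i hin => ?_⟩
  exact mul_zpow_lt_of_forall_le hα (norm_pos_iff.2 han) hin (fun η' hη' => hle η' hη' i) η hη

end Dominant

section Convergence

variable {K : Type*} [NormedField K] {α β : ℝ}

def laurentOne : ℤ → K := fun i => if i = 0 then 1 else 0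

theorem convergesOnOpenAnnulus_laurentOne :
    ConvergesOnOpenAnnulus α β (laurentOne (K := K)) := by
  refine convergesOnOpenAnnulus_iff.2 fun η _ => tendsto_const_nhds.congr' ?_
  filter_upwards [(Set.finite_singleton (0 : ℤ)).compl_mem_cofinite] with i hi
  simp [laurentOne, show i ≠ 0 from hi]

theorem ConvergesOnOpenAnnulus.sub {a b : ℤ → K} (ha : ConvergesOnOpenAnnulus α β a)
    (hb : ConvergesOnOpenAnnulus α β b) : ConvergesOnOpenAnnulus α β (a - b) := by
  intro η hη
  refine tendsto_zero_iff_norm_tendsto_zero.2 (squeeze_zero (fun i => norm_nonneg _)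
    (fun i => ?_) (by simpa using (ha η hη).norm.add (hb η hη).norm))
  simp only [norm_mul, norm_zpow, Real.norm_eq_abs, abs_norm, Pi.sub_apply, ← add_mul]
  gcongr
  exact norm_sub_le (a i) (b i)

theorem ConvergesOnOpenAnnulus.const_mul_shift (hα : 0 < α) {a : ℤ → K}
    (ha : ConvergesOnOpenAnnulus α β a) (c : K) (n : ℤ) :
    ConvergesOnOpenAnnulus α β (fun i => c * a (i + n)) := by
  rw [convergesOnOpenAnnulus_iff] at ha ⊢
  intro η hη
  have hηpos : 0 < η := hα.trans hη.1
  have h := (((ha η hη).comp (add_left_injective n).tendsto_cofinite).const_mul (‖c‖ * η ^ (-n)))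
  rw [mul_zero] at h
  refine h.congr fun i => ?_
  simp only [Function.comp_apply, norm_mul, zpow_add₀ hηpos.ne', zpow_neg]
  field_simp

theorem convergesOnOpenAnnulus_of_forall_bdd (hα : 0 < α) {a : ℤ → K}
    (h : ∀ η ∈ Ioo α β, ∃ C, ∀ i, ‖a i‖ * η ^ i ≤ C) : ConvergesOnOpenAnnulus α β a := by
  intro η hη
  have hηpos : 0 < η := hα.trans hη.1
  have key : ∀ η' ∈ Ioo α β, ∃ C, ∀ i, ‖a i‖ * η ^ i ≤ C * (η / η') ^ i := by
    intro η' hη'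
    obtain ⟨C, hC⟩ := h η' hη'
    have hη'pos : 0 < η' := hα.trans hη'.1
    refine ⟨C, fun i => ?_⟩
    calc ‖a i‖ * η ^ i = ‖a i‖ * η' ^ i * (η / η') ^ i := by rw [div_zpow]; field_simp
      _ ≤ C * (η / η') ^ i := by gcongr; exact hC i
  rw [cocompact_eq_atBot_atTop, tendsto_sup]
  constructor
  · obtain ⟨η₁, hαη₁, hη₁η⟩ := exists_between hη.1
    obtain ⟨C, hC⟩ := key η₁ ⟨hαη₁, hη₁η.trans hη.2⟩
    refine squeeze_zero (fun i => by positivity) hC ?_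
    simpa using (tendsto_zpow_atBot_nhds_zero_of_one_lt
      ((one_lt_div (hα.trans hαη₁)).2 hη₁η)).const_mul C
  · obtain ⟨η₂, hηη₂, hη₂β⟩ := exists_between hη.2
    obtain ⟨C, hC⟩ := key η₂ ⟨hη.1.trans hηη₂, hη₂β⟩
    have hη₂pos : 0 < η₂ := hηpos.trans hηη₂
    refine squeeze_zero (fun i => by positivity) hC ?_
    simpa using (tendsto_zpow_atTop_nhds_zero_of_lt_one (div_pos hηpos hη₂pos)
      ((div_lt_one hη₂pos).2 hηη₂)).const_mul C

end Convergence

section LaurentMul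

variable {K : Type*} [NormedField K]

theorem laurentMul_laurentOne_left (g : ℤ → K) : laurentMul laurentOne g = g := by
  ext i
  rw [laurentMul, tsum_eq_single 0 fun j hj => by simp [laurentOne, hj]]
  simp [laurentOne]

theorem laurentMul_shift_right (a b : ℤ → K) (n : ℤ) :
    laurentMul a (fun i => b (i + n)) = laurentMul (fun i => a (i + n)) b := by
  ext i
  rw [laurentMul, laurentMul, ← (Equiv.addRight n).tsum_eq]
  congr! 3 with j
  simp only [Equiv.coe_addRight]
  ring_nf

theorem laurentMul_sub_left {f f' g : ℤ → K} {i : ℤ} (hf : Summable fun j => f j * g (i - j))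
    (hf' : Summable fun j => f' j * g (i - j)) :
    laurentMul (f - f') g i = laurentMul f g i - laurentMul f' g i := by
  simp only [laurentMul, Pi.sub_apply, sub_mul]
  exact hf.tsum_sub hf'

theorem summable_laurentOne_mul (g : ℤ → K) (i : ℤ) :
    Summable fun j => laurentOne j * g (i - j) :=
  (hasSum_single 0 fun j hj => by simp [laurentOne, hj]).summable

theorem norm_mul_le_of_mul_zpow_le {f g : ℤ → K} {η C D : ℝ} (hη : 0 < η) {i j : ℤ}
    (hC : 0 ≤ C) (hf : ‖f j‖ * η ^ j ≤ C) (hg : ‖g (i - j)‖ * η ^ (i - j) ≤ D) :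
    ‖f j * g (i - j)‖ ≤ C * D / η ^ i := by
  have hsplit : η ^ i = η ^ j * η ^ (i - j) := by rw [← zpow_add₀ hη.ne', add_sub_cancel]
  rw [le_div_iff₀ (zpow_pos hη i), hsplit, norm_mul]
  calc ‖f j‖ * ‖g (i - j)‖ * (η ^ j * η ^ (i - j))
      = ‖f j‖ * η ^ j * (‖g (i - j)‖ * η ^ (i - j)) := by ring
    _ ≤ C * D := mul_le_mul hf hg (by positivity) hC

variable [IsUltrametricDist K] {η : ℝ}

theorem summable_laurentMul [CompleteSpace K] {f g : ℤ → K} {D : ℝ} (hη : 0 < η)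
    (hf : Tendsto (fun j => ‖f j‖ * η ^ j) cofinite (𝓝 0)) (hg : ∀ j, ‖g j‖ * η ^ j ≤ D)
    (i : ℤ) : Summable fun j => f j * g (i - j) := by
  refine NonarchimedeanAddGroup.summable_of_tendsto_cofinite_zero
    (tendsto_zero_iff_norm_tendsto_zero.2 (squeeze_zero (fun j => norm_nonneg _)
      (fun j => norm_mul_le_of_mul_zpow_le hη (by positivity) le_rfl (hg (i - j))) ?_))
  simpa using (hf.mul_const D).div_const (η ^ i)

theorem norm_laurentMul_mul_zpow_le {f g : ℤ → K} {C D : ℝ} (hη : 0 < η) (hC : 0 ≤ C)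
    (hD : 0 ≤ D) (hf : ∀ j, ‖f j‖ * η ^ j ≤ C) (hg : ∀ j, ‖g j‖ * η ^ j ≤ D) (i : ℤ) :
    ‖laurentMul f g i‖ * η ^ i ≤ C * D :=
  (le_div_iff₀ (zpow_pos hη i)).1 <|
    IsUltrametricDist.norm_tsum_le_of_forall_le_of_nonneg (by positivity)
      fun j => norm_mul_le_of_mul_zpow_le hη hC (hf j) (hg (i - j))

end LaurentMul

section GeometricSeries

variable {K : Type*} [NormedField K]

noncomputable def laurentPow (w : ℤ → K) : ℕ → ℤ → K
  | 0 => laurentOne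
  | k + 1 => laurentMul w (laurentPow w k)

noncomputable def laurentGeomSeries (w : ℤ → K) : ℤ → K := fun i => ∑' k, laurentPow w k i

variable [IsUltrametricDist K] {w : ℤ → K} {η M : ℝ}

theorem norm_laurentPow_mul_zpow_le (hη : 0 < η) (hM : 0 ≤ M) (hw : ∀ j, ‖w j‖ * η ^ j ≤ M)
    (k : ℕ) (i : ℤ) : ‖laurentPow w k i‖ * η ^ i ≤ M ^ k := by
  induction k generalizing i with
  | zero => by_cases hi : i = 0 <;> simp [laurentPow, laurentOne, hi]
  | succ k ih =>
    rw [pow_succ']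
    exact norm_laurentMul_mul_zpow_le hη hM (pow_nonneg hM k) hw ih i

theorem norm_laurentGeomSeries_mul_zpow_le (hη : 0 < η) (hM : 0 ≤ M) (hM₁ : M ≤ 1)
    (hw : ∀ j, ‖w j‖ * η ^ j ≤ M) (i : ℤ) : ‖laurentGeomSeries w i‖ * η ^ i ≤ 1 :=
  (le_div_iff₀ (zpow_pos hη i)).1 <|
    IsUltrametricDist.norm_tsum_le_of_forall_le_of_nonneg (by positivity) fun k =>
      (le_div_iff₀ (zpow_pos hη i)).2
        ((norm_laurentPow_mul_zpow_le hη hM hw k i).trans (pow_le_one₀ hM hM₁))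

variable [CompleteSpace K]

theorem summable_laurentPow (hη : 0 < η) (hM : 0 ≤ M) (hM₁ : M < 1)
    (hw : ∀ j, ‖w j‖ * η ^ j ≤ M) (i : ℤ) : Summable fun k => laurentPow w k i :=
  .of_norm_bounded ((summable_geometric_of_lt_one hM hM₁).div_const (η ^ i)) fun k =>
    (le_div_iff₀ (zpow_pos hη i)).2 (norm_laurentPow_mul_zpow_le hη hM hw k i)

theorem laurentMul_laurentGeomSeries (hη : 0 < η) (hM : 0 ≤ M) (hM₁ : M < 1)
    (hw : ∀ j, ‖w j‖ * η ^ j ≤ M) (hw₀ : Tendsto (fun j => ‖w j‖ * η ^ j) cofinite (𝓝 0)) :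
    laurentMul w (laurentGeomSeries w) = laurentGeomSeries w - laurentOne := by
  ext i
  have hMpow : Tendsto (fun k : ℕ => M ^ k) cofinite (𝓝 0) :=
    Nat.cofinite_eq_atTop ▸ tendsto_pow_atTop_nhds_zero_of_lt_one hM hM₁
  have hsum :
      Summable (Function.uncurry fun (k : ℕ) (j : ℤ) => w j * laurentPow w k (i - j)) := by
    refine NonarchimedeanAddGroup.summable_of_tendsto_cofinite_zero
      (tendsto_zero_iff_norm_tendsto_zero.2 (squeeze_zero (fun _ => norm_nonneg _) (fun p => ?_)
        (by simpa using (tendsto_mul_cofinite_nhds_zero hMpow hw₀).div_const (η ^ i))))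
    exact (norm_mul_le_of_mul_zpow_le hη (by positivity) le_rfl
      (norm_laurentPow_mul_zpow_le hη hM hw p.1 (i - p.2))).trans_eq (by ring)
  calc laurentMul w (laurentGeomSeries w) i
        = ∑' (j : ℤ) (k : ℕ), w j * laurentPow w k (i - j) := tsum_congr fun j => tsum_mul_left.symm
    _ = ∑' k : ℕ, laurentPow w (k + 1) i := hsum.tsum_comm
    _ = (laurentGeomSeries w - laurentOne : ℤ → K) i := by
        rw [Pi.sub_apply, laurentGeomSeries,
          (summable_laurentPow hη hM hM₁ hw i).tsum_eq_zero_add]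
        simp [laurentPow]

theorem laurentMul_one_sub_laurentGeomSeries (hη : 0 < η) (hM : 0 ≤ M) (hM₁ : M < 1)
    (hw : ∀ j, ‖w j‖ * η ^ j ≤ M) (hw₀ : Tendsto (fun j => ‖w j‖ * η ^ j) cofinite (𝓝 0)) :
    laurentMul (laurentOne - w) (laurentGeomSeries w) = laurentOne := by
  ext i
  rw [laurentMul_sub_left (summable_laurentOne_mul _ i)
    (summable_laurentMul hη hw₀ (norm_laurentGeomSeries_mul_zpow_le hη hM hM₁.le hw) i),
    laurentMul_laurentOne_left, laurentMul_laurentGeomSeries hη hM hM₁ hw hw₀]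
  simp

end GeometricSeries

section Units

variable {K : Type*} [NormedField K] [CompleteSpace K] [IsUltrametricDist K] {α β : ℝ}

theorem exists_laurentMul_one_sub_eq_laurentOne (hα : 0 < α) (hαβ : α < β) {w : ℤ → K}
    (hw : ConvergesOnOpenAnnulus α β w) (hsmall : ∀ η ∈ Ioo α β, ∀ j, ‖w j‖ * η ^ j < 1) :
    ∃ s, ConvergesOnOpenAnnulus α β s ∧ laurentMul (laurentOne - w) s = laurentOne := by
  have hM : ∀ η ∈ Ioo α β, ∃ M, 0 ≤ M ∧ M < 1 ∧ ∀ j, ‖w j‖ * η ^ j ≤ M := fun η hη =>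
    (convergesOnOpenAnnulus_iff.1 hw η hη).exists_le_lt_of_forall_lt one_pos (hsmall η hη)
  refine ⟨laurentGeomSeries w, convergesOnOpenAnnulus_of_forall_bdd hα fun η hη => ?_, ?_⟩
  · obtain ⟨M, hM₀, hM₁, hwM⟩ := hM η hη
    exact ⟨1, norm_laurentGeomSeries_mul_zpow_le (hα.trans hη.1) hM₀ hM₁.le hwM⟩
  · have hμ : (α + β) / 2 ∈ Ioo α β := ⟨by linarith, by linarith⟩
    obtain ⟨M, hM₀, hM₁, hwM⟩ := hM _ hμ
    exact laurentMul_one_sub_laurentGeomSeries (hα.trans hμ.1) hM₀ hM₁ hwM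
      (convergesOnOpenAnnulus_iff.1 hw _ hμ)

theorem exists_laurentMul_eq_laurentOne_of_dominant (hα : 0 < α) (hαβ : α < β) {a : ℤ → K}
    (ha : ConvergesOnOpenAnnulus α β a) {n : ℤ} (han : a n ≠ 0)
    (hdom : ∀ η ∈ Ioo α β, ∀ i ≠ n, ‖a i‖ * η ^ i < ‖a n‖ * η ^ n) :
    ∃ b, ConvergesOnOpenAnnulus α β b ∧ laurentMul a b = laurentOne := by
  set d : ℤ → K := fun i => (a n)⁻¹ * a (i + n)
  have hsmall : ∀ η ∈ Ioo α β, ∀ j, ‖(laurentOne - d : ℤ → K) j‖ * η ^ j < 1 := by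
    intro η hη j
    have hηpos : 0 < η := hα.trans hη.1
    by_cases hj : j = 0
    · simp [hj, d, laurentOne, han]
    have h := hdom η hη (j + n) (by omega)
    rw [zpow_add₀ hηpos.ne', ← mul_assoc] at h
    have hd : ‖(laurentOne - d : ℤ → K) j‖ * η ^ j = ‖a (j + n)‖ * η ^ j / ‖a n‖ := by
      simp [hj, d, laurentOne]
      ring
    rw [hd, div_lt_one (norm_pos_iff.2 han)]
    exact lt_of_mul_lt_mul_right h (zpow_pos hηpos n).le
  obtain ⟨s, hs, hds⟩ := exists_laurentMul_one_sub_eq_laurentOne hα hαβ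
    (convergesOnOpenAnnulus_laurentOne.sub (ha.const_mul_shift hα _ n)) hsmall
  refine ⟨fun i => (a n)⁻¹ * s (i + n), hs.const_mul_shift hα _ n, ?_⟩
  rw [sub_sub_cancel] at hds
  rw [laurentMul_shift_right a (fun i => (a n)⁻¹ * s i), ← hds]
  ext i
  exact tsum_congr fun j => mul_left_comm _ _ _ |>.trans (mul_assoc _ _ _).symm

end Units

/-- Lemma (`L:criterion-unit-1`): let `K` be a complete nonarchimedean field,
`0 < α < β`, and `x = Σ aᵢ tⁱ` a nonzero Laurent series convergent on the open
annulus `α < |t| < β`.  If `r ↦ log |x|_{e^{−r}}` is affine on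
`(−log β, −log α)`, then `x` is a unit in `K{{α/t, t/β}}`. -/
theorem laurent_unit_of_affine_gaussNorm
    (K : Type*) [NormedField K] [CompleteSpace K] [IsUltrametricDist K]
    (α β : ℝ) (hα : 0 < α) (hαβ : α < β)
    (a : ℤ → K) (ha : ConvergesOnOpenAnnulus α β a) (hne : a ≠ 0)
    (haff : ∃ m c : ℝ, ∀ r ∈ Set.Ioo (-Real.log β) (-Real.log α),
        Real.log (gaussNormZ a (Real.exp (-r))) = m * r + c) :
    ∃ b : ℤ → K, ConvergesOnOpenAnnulus α β b ∧
      laurentMul a b = fun i => if i = 0 then (1 : K) else 0 := by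
  obtain ⟨n, han, hdom⟩ := exists_dominant_term_of_affine_log_gaussNormZ hα hαβ ha hne haff
  exact exists_laurentMul_eq_laurentOne_of_dominant hα hαβ ha han hdom
end

section
/- Let K be a complete nonarchimedean field and let x = Σ_{i≥0} aᵢ tⁱ be a nonzero power series with coefficients in K satisfying sup_i |aᵢ| < ∞ (i.e., x ∈ K⟦t⟧₀, the ring of bounded power series on the open unit disc). Then x is a unit in K⟦t⟧₀ if and only if the function r ↦ |x|_{e^{−r}} := sup_i |aᵢ| e^{−ri} is constant in some neighborhood of r = 0 within [0,∞). -/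
open Finset

/-- A power series with bounded coefficients, i.e. an element of `K⟦t⟧₀`. -/
def IsBoundedSeries {K : Type*} [NormedField K] (a : ℕ → K) : Prop :=
  BddAbove (Set.range fun i => ‖a i‖)

/-- The Cauchy product of power series (the multiplication of `K⟦t⟧₀`). -/
def seriesMul {K : Type*} [NormedField K] (a b : ℕ → K) : ℕ → K :=
  fun i => ∑ j ∈ range (i + 1), a j * b (i - j)

/-- The `e^{−r}`-Gauss norm of a power series. -/
noncomputable def gaussNorm {K : Type*} [NormedField K] (a : ℕ → K) (r : ℝ) : ℝ :=
  ⨆ i : ℕ, ‖a i‖ * Real.exp (-r * i)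

/-! Both conditions are equivalent to `|a₀| = sup |aᵢ|`. Under it, `|x|_{e^{-r}} = |a₀|` for all
`r ≥ 0`, and the recursion for the coefficients of `x⁻¹` stays bounded by `|a₀|⁻¹` by the
ultrametric inequality. If instead `|a₀| < sup |aᵢ| = |x|₁`, then
`|x|_{e^{-r}} ≤ max |a₀| (e^{-r} |x|₁) < |x|₁` for every `r > 0`. Finally, if `xy = 1` and
`0 < ρ < 1`, let `m`, `n` be the least indices maximizing `|aᵢ| ρⁱ` and `|bᵢ| ρⁱ`: the term
`a_m b_n` strictly dominates the coefficient of `xy` at `m + n`, which is therefore nonzero, so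
`m = n = 0`; letting `ρ → 1` in `|aᵢ| ρⁱ ≤ |a₀|` gives `|aᵢ| ≤ |a₀|`. -/

open Filter Topology
open PowerSeries (coeff constantCoeff mk)
open scoped PowerSeries

lemma exists_forall_le_of_tendsto_zero {f : ℕ → ℝ} (hf : Tendsto f atTop (𝓝 0)) {i₀ : ℕ}
    (hi₀ : 0 < f i₀) : ∃ m, ∀ i, f i ≤ f m := by
  obtain ⟨N, hN⟩ := eventually_atTop.1 (hf.eventually (gt_mem_nhds hi₀))
  obtain ⟨m, -, hm⟩ := exists_max_image (range (max N i₀ + 1)) f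
    ⟨i₀, mem_range.2 (by omega)⟩
  refine ⟨m, fun i => ?_⟩
  rcases le_or_gt i (max N i₀) with hi | hi
  · exact hm i (mem_range.2 (by omega))
  · exact (hN i (by omega)).le.trans (hm i₀ (mem_range.2 (by omega)))

lemma exists_least_maximizer {α : Type*} [LinearOrder α] {f : ℕ → α}
    (hf : ∃ m, ∀ i, f i ≤ f m) : ∃ m, (∀ i, f i ≤ f m) ∧ ∀ j < m, f j < f m := by
  classical
  refine ⟨Nat.find hf, Nat.find_spec hf, fun j hj => ?_⟩
  refine (Nat.find_spec hf j).lt_of_ne fun hjm => Nat.find_min hf hj fun i => ?_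
  exact hjm ▸ Nat.find_spec hf i

lemma le_of_forall_mul_pow_le {x y : ℝ} {n : ℕ} (h : ∀ ρ ∈ Set.Ioo (0 : ℝ) 1, x * ρ ^ n ≤ y) :
    x ≤ y := by
  have hlim : Tendsto (fun ρ : ℝ => x * ρ ^ n) (𝓝[<] 1) (𝓝 x) := by
    simpa using ((continuous_pow n).tendsto 1).const_mul x |>.mono_left nhdsWithin_le_nhds
  exact le_of_tendsto hlim
    (eventually_of_mem (Ioo_mem_nhdsLT (by norm_num : (0 : ℝ) < 1)) h)

lemma norm_sum_lt_of_forall_lt {M ι : Type*} [SeminormedAddCommGroup M] [IsUltrametricDist M]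
    {s : Finset ι} {f : ι → M} {C : ℝ} (hC : 0 < C) (h : ∀ i ∈ s, ‖f i‖ < C) :
    ‖∑ i ∈ s, f i‖ < C := by
  rcases s.eq_empty_or_nonempty with rfl | hs
  · simpa using hC
  · exact (hs.norm_sum_le_sup'_norm f).trans_lt ((sup'_lt_iff hs).2 h)

section BoundedSeries

variable {K : Type*} [NormedField K]

lemma seriesMul_eq_coeff_mul (a b : ℕ → K) :
    seriesMul a b = fun n => coeff n (mk a * mk b) := by
  funext n
  rw [PowerSeries.coeff_mul,
    Nat.sum_antidiagonal_eq_sum_range_succ fun i j => coeff i (mk a) * coeff j (mk b)]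
  simp only [PowerSeries.coeff_mk, seriesMul]

lemma IsBoundedSeries.tendsto_norm_mul_pow {a : ℕ → K} (ha : IsBoundedSeries a) {ρ : ℝ}
    (hρ0 : 0 ≤ ρ) (hρ1 : ρ < 1) : Tendsto (fun i => ‖a i‖ * ρ ^ i) atTop (𝓝 0) := by
  obtain ⟨C, hC⟩ := ha
  have hpow := (tendsto_pow_atTop_nhds_zero_of_lt_one hρ0 hρ1).const_mul C
  rw [mul_zero] at hpow
  exact squeeze_zero (fun i => by positivity)
    (fun i => mul_le_mul_of_nonneg_right (hC ⟨i, rfl⟩) (by positivity)) hpow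

lemma gaussNorm_eq_norm_zero {a : ℕ → K} (h : ∀ i, ‖a i‖ ≤ ‖a 0‖) {r : ℝ} (hr : 0 ≤ r) :
    gaussNorm a r = ‖a 0‖ := by
  have hle : ∀ i : ℕ, ‖a i‖ * Real.exp (-r * i) ≤ ‖a 0‖ := fun i =>
    (mul_le_of_le_one_right (norm_nonneg _)
      (Real.exp_le_one_iff.2 (by nlinarith [Nat.cast_nonneg (α := ℝ) i]))).trans (h i)
  refine le_antisymm (ciSup_le hle) ?_
  simpa [gaussNorm] using le_ciSup (f := fun i : ℕ => ‖a i‖ * Real.exp (-r * i))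
    ⟨‖a 0‖, Set.forall_mem_range.2 hle⟩ 0

lemma gaussNorm_zero (a : ℕ → K) : gaussNorm a 0 = ⨆ i, ‖a i‖ := by
  simp [gaussNorm]

lemma gaussNorm_le_max {a : ℕ → K} (ha : IsBoundedSeries a) {r : ℝ} (hr : 0 ≤ r) :
    gaussNorm a r ≤ max ‖a 0‖ (gaussNorm a 0 * Real.exp (-r)) := by
  refine ciSup_le fun i => ?_
  rcases Nat.eq_zero_or_pos i with rfl | hi
  · simp
  · refine le_max_of_le_right (mul_le_mul ?_ ?_ (Real.exp_pos _).le ?_)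
    · exact (gaussNorm_zero a).symm ▸ le_ciSup ha i
    · exact Real.exp_le_exp.2 (by nlinarith [(Nat.one_le_cast (α := ℝ)).2 hi])
    · exact (gaussNorm_zero a).symm ▸ (norm_nonneg _).trans (le_ciSup ha 0)

lemma norm_le_norm_zero_of_gaussNorm_eq {a : ℕ → K} (ha : IsBoundedSeries a) {r : ℝ}
    (hr : 0 < r) (h : gaussNorm a r = gaussNorm a 0) (i : ℕ) : ‖a i‖ ≤ ‖a 0‖ := by
  by_contra! hi
  have hS : ‖a 0‖ < gaussNorm a 0 := hi.trans_le ((gaussNorm_zero a).symm ▸ le_ciSup ha i)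
  have hexp : Real.exp (-r) < 1 := Real.exp_lt_one_iff.2 (neg_lt_zero.2 hr)
  have := h ▸ gaussNorm_le_max ha hr.le
  exact (max_lt hS (mul_lt_of_lt_one_right (by linarith [norm_nonneg (a 0)]) hexp)).not_ge this

lemma norm_coeff_inv_le [IsUltrametricDist K] {φ : K⟦X⟧}
    (h : ∀ i, ‖coeff i φ‖ ≤ ‖constantCoeff φ‖) (n : ℕ) :
    ‖coeff n φ⁻¹‖ ≤ ‖constantCoeff φ‖⁻¹ := by
  induction n using Nat.strong_induction_on with
  | _ n ih =>
    rw [PowerSeries.coeff_inv]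
    split_ifs with hn
    · rw [norm_inv]
    · have hsum : ‖∑ x ∈ antidiagonal n,
          if x.2 < n then coeff x.1 φ * coeff x.2 φ⁻¹ else 0‖ ≤ 1 := by
        refine IsUltrametricDist.norm_sum_le_of_forall_le_of_nonneg zero_le_one fun x _ => ?_
        split_ifs with hx
        · rw [norm_mul]
          exact (mul_le_mul (h _) (ih _ hx) (norm_nonneg _) (norm_nonneg _)).trans mul_inv_le_one
        · simp
      rw [norm_mul, norm_neg, norm_inv]
      exact mul_le_of_le_one_right (by positivity) hsum

lemma norm_seriesMul_add_eq [IsUltrametricDist K] {a b : ℕ → K} {ρ : ℝ} (hρ : 0 < ρ)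
    {m n : ℕ} (ham : a m ≠ 0) (hbn : b n ≠ 0)
    (hm : ∀ i, ‖a i‖ * ρ ^ i ≤ ‖a m‖ * ρ ^ m) (hm' : ∀ j < m, ‖a j‖ * ρ ^ j < ‖a m‖ * ρ ^ m)
    (hn : ∀ i, ‖b i‖ * ρ ^ i ≤ ‖b n‖ * ρ ^ n) (hn' : ∀ j < n, ‖b j‖ * ρ ^ j < ‖b n‖ * ρ ^ n) :
    ‖seriesMul a b (m + n)‖ = ‖a m‖ * ‖b n‖ := by
  set f : ℕ → ℝ := fun i => ‖a i‖ * ρ ^ i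
  set g : ℕ → ℝ := fun i => ‖b i‖ * ρ ^ i
  have hfm : 0 < f m := by positivity
  have hgn : 0 < g n := by positivity
  have hweight : ∀ j ≤ m + n, ‖a j * b (m + n - j)‖ * ρ ^ (m + n) = f j * g (m + n - j) := by
    intro j hj
    rw [norm_mul, show ρ ^ (m + n) = ρ ^ j * ρ ^ (m + n - j) by rw [← pow_add]; congr 1; omega]
    ring
  have hdom : ∀ j ∈ (range (m + n + 1)).erase m, ‖a j * b (m + n - j)‖ < ‖a m * b n‖ := by
    intro j hj
    obtain ⟨hjm, hj⟩ := mem_erase.1 hj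
    have hj : j ≤ m + n := Nat.lt_succ_iff.1 (mem_range.1 hj)
    refine lt_of_mul_lt_mul_right ?_ (pow_nonneg hρ.le (m + n))
    have hmn := hweight m (by omega)
    rw [Nat.add_sub_cancel_left] at hmn
    rw [hweight j hj, hmn]
    rcases hjm.lt_or_gt with hlt | hgt
    · calc f j * g (m + n - j) ≤ f j * g n := by gcongr; exact hn _
        _ < f m * g n := by gcongr; exact hm' j hlt
    · calc f j * g (m + n - j) ≤ f m * g (m + n - j) := by gcongr; exact hm j
        _ < f m * g n := by gcongr; exact hn' _ (by omega)
  have hsplit := add_sum_erase (range (m + n + 1)) (fun j => a j * b (m + n - j))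
    (mem_range.2 (by omega : m < m + n + 1))
  rw [Nat.add_sub_cancel_left] at hsplit
  have hrest := norm_sum_lt_of_forall_lt (norm_pos_iff.2 (mul_ne_zero ham hbn)) hdom
  rw [seriesMul, ← hsplit, IsUltrametricDist.norm_add_eq_max_of_norm_ne_norm hrest.ne',
    max_eq_left hrest.le, norm_mul]

lemma IsBoundedSeries.exists_least_maximizer {a : ℕ → K} (ha : IsBoundedSeries a) (hne : a ≠ 0)
    {ρ : ℝ} (hρ : ρ ∈ Set.Ioo (0 : ℝ) 1) :
    ∃ m, a m ≠ 0 ∧ (∀ i, ‖a i‖ * ρ ^ i ≤ ‖a m‖ * ρ ^ m) ∧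
      ∀ j < m, ‖a j‖ * ρ ^ j < ‖a m‖ * ρ ^ m := by
  obtain ⟨i₀, hi₀⟩ := Function.ne_iff.1 hne
  have hpos : 0 < ‖a i₀‖ * ρ ^ i₀ := mul_pos (norm_pos_iff.2 hi₀) (pow_pos hρ.1 i₀)
  obtain ⟨m, hm, hm'⟩ := _root_.exists_least_maximizer
    (exists_forall_le_of_tendsto_zero (ha.tendsto_norm_mul_pow hρ.1.le hρ.2) hpos)
  refine ⟨m, fun ham => ?_, hm, hm'⟩
  simpa [ham] using hpos.trans_le (hm i₀)

lemma norm_mul_pow_le_norm_zero_of_seriesMul_eq_one [IsUltrametricDist K] {a b : ℕ → K}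
    (ha : IsBoundedSeries a) (hb : IsBoundedSeries b)
    (hab : seriesMul a b = fun i => if i = 0 then 1 else 0) {ρ : ℝ} (hρ : ρ ∈ Set.Ioo (0 : ℝ) 1)
    (i : ℕ) : ‖a i‖ * ρ ^ i ≤ ‖a 0‖ := by
  have h00 : a 0 * b 0 = 1 := by simpa [seriesMul] using congrFun hab 0
  obtain ⟨m, ham, hm, hm'⟩ :=
    ha.exists_least_maximizer (fun h => by simp [h] at h00) hρ
  obtain ⟨n, hbn, hn, hn'⟩ :=
    hb.exists_least_maximizer (fun h => by simp [h] at h00) hρ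
  have hmn : m + n = 0 := by
    by_contra hmn
    have hcoeff := norm_seriesMul_add_eq hρ.1 ham hbn hm hm' hn hn'
    simp only [hab, if_neg hmn, norm_zero] at hcoeff
    exact (mul_pos (norm_pos_iff.2 ham) (norm_pos_iff.2 hbn)).ne hcoeff
  simpa [show m = 0 by omega] using hm i

end BoundedSeries

theorem bounded_series_unit_iff_general
    (K : Type*) [NormedField K] [IsUltrametricDist K]
    (a : ℕ → K) (ha : IsBoundedSeries a) (hne : a ≠ 0) :
    (∃ b : ℕ → K, IsBoundedSeries b ∧
        seriesMul a b = fun i => if i = 0 then (1 : K) else 0) ↔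
    (∃ ε : ℝ, 0 < ε ∧ ∀ r₁ ∈ Set.Ico (0:ℝ) ε, ∀ r₂ ∈ Set.Ico (0:ℝ) ε,
        gaussNorm a r₁ = gaussNorm a r₂) := by
  constructor
  · rintro ⟨b, hb, hab⟩
    have hdom (i : ℕ) : ‖a i‖ ≤ ‖a 0‖ := le_of_forall_mul_pow_le fun ρ hρ =>
      norm_mul_pow_le_norm_zero_of_seriesMul_eq_one ha hb hab hρ i
    refine ⟨1, one_pos, fun r₁ hr₁ r₂ hr₂ => ?_⟩
    rw [gaussNorm_eq_norm_zero hdom hr₁.1, gaussNorm_eq_norm_zero hdom hr₂.1]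
  · rintro ⟨ε, hε, hconst⟩
    have hdom : ∀ i, ‖a i‖ ≤ ‖a 0‖ := norm_le_norm_zero_of_gaussNorm_eq ha (half_pos hε)
      (hconst _ ⟨(half_pos hε).le, half_lt_self hε⟩ 0 ⟨le_rfl, hε⟩)
    have ha0 : a 0 ≠ 0 := fun h0 =>
      hne <| funext fun i => norm_le_zero_iff.1 (by simpa [h0] using hdom i)
    refine ⟨fun n => coeff n (mk a)⁻¹,
      ⟨_, Set.forall_mem_range.2 (norm_coeff_inv_le (φ := mk a) (by simpa using hdom))⟩, ?_⟩
    have hinv : mk (fun n => coeff n (mk a)⁻¹) = (mk a)⁻¹ := PowerSeries.ext fun n => by simp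
    rw [seriesMul_eq_coeff_mul, hinv, PowerSeries.mul_inv_cancel _ (by simpa using ha0)]
    simp only [PowerSeries.coeff_one]

/-- Lemma (`L:criterion-unit-2`(a)): a nonzero bounded power series
`x = Σ aᵢ tⁱ ∈ K⟦t⟧₀` over a complete nonarchimedean field is a unit in `K⟦t⟧₀`
if and only if `r ↦ |x|_{e^{−r}}` is constant in a neighborhood of `r = 0`
within `[0, ∞)`. -/
theorem bounded_series_unit_iff
    (K : Type*) [NormedField K] [CompleteSpace K] [IsUltrametricDist K]
    (a : ℕ → K) (ha : IsBoundedSeries a) (hne : a ≠ 0) :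
    (∃ b : ℕ → K, IsBoundedSeries b ∧
        seriesMul a b = fun i => if i = 0 then (1 : K) else 0) ↔
    (∃ ε : ℝ, 0 < ε ∧ ∀ r₁ ∈ Set.Ico (0:ℝ) ε, ∀ r₂ ∈ Set.Ico (0:ℝ) ε,
        gaussNorm a r₁ = gaussNorm a r₂) :=
  bounded_series_unit_iff_general K a ha hne
end

section
/- Let p be a prime and ζ a primitive p-th root of unity in a ring of characteristic zero containing ℤ[ζ]. Then the sum S(n) = Σ_{i=0}^{p−1} (ζⁱ − 1)ⁿ ζⁱ satisfies: S(n) = 0 for n = 0, 1, …, p−2; S(p−1) = p; and S(n) is divisible by p² in ℤ[ζ] ∩ ℤ (i.e., p² divides the integer S(n)) for all n ≥ p. -/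
open Finset

/-!
Expanding `(ζⁱ - 1)ⁿ ζⁱ` binomially and summing the geometric series `Σᵢ ζ^{i(k+1)}`, which is
`p` when `p ∣ k + 1` and `0` otherwise, gives `S(n) = p · T(n)`, where `T(n)` is the sum of the
coefficients of `(X - 1)ⁿ X` at exponents divisible by `p`. For `n < p` the only such exponent
that can occur is `p`, in the monic leading term when `n = p - 1`. For `n ≥ p`, the same coefficient sum read off in the
group algebra `𝔽_p[ℤ/p]` is the coefficient at `0` of `(g - 1)ⁿ g`, which vanishes because
`(g - 1)ᵖ = gᵖ - 1 = 0` there; hence `p ∣ T(n)`.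
-/

/-- The sum of the coefficients of `(X - 1) ^ n * X` at the exponents divisible by `p`. -/
def multisectionSum (p n : ℕ) : ℤ :=
  ∑ k ∈ range (n + 1), if p ∣ k + 1 then (-1) ^ (k + n) * (n.choose k : ℤ) else 0

lemma sub_one_pow_mul_self {A : Type*} [CommRing A] (x : A) (n : ℕ) :
    (x - 1) ^ n * x =
      ∑ k ∈ range (n + 1), ((-1) ^ (k + n) * (n.choose k : ℤ)) • x ^ (k + 1) := by
  rw [sub_pow, sum_mul]
  refine sum_congr rfl fun k _ => ?_
  rw [zsmul_eq_mul]
  push_cast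
  ring

lemma map_sub_one_pow_mul_self {A M : Type*} [CommRing A] [AddCommGroup M] (ε : A →+ M)
    {p : ℕ} {x : A} {c : M} (hε : ∀ m, ε (x ^ m) = if p ∣ m then c else 0) (n : ℕ) :
    ε ((x - 1) ^ n * x) = multisectionSum p n • c := by
  simp only [sub_one_pow_mul_self, map_sum, map_zsmul, hε, multisectionSum, sum_smul,
    smul_ite, ite_smul, smul_zero, zero_smul]

lemma multisectionSum_eq_zero {p n : ℕ} (hn : n + 1 < p) : multisectionSum p n = 0 :=
  sum_eq_zero fun k hk => if_neg fun hdvd => by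
    have := Nat.le_of_dvd k.succ_pos hdvd
    rw [mem_range] at hk
    omega

lemma multisectionSum_sub_one {p : ℕ} (hp : 0 < p) : multisectionSum p (p - 1) = 1 := by
  rw [multisectionSum, sum_eq_single_of_mem (p - 1) (self_mem_range_succ _)]
  · simp [Nat.sub_add_cancel hp, ← two_mul]
  · intro k hk hne
    refine if_neg fun hdvd => ?_
    have := Nat.le_of_dvd k.succ_pos hdvd
    rw [mem_range] at hk
    omega

lemma prime_dvd_multisectionSum {p n : ℕ} (hp : p.Prime) (hn : p ≤ n) :
    (p : ℤ) ∣ multisectionSum p n := by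
  have := Fact.mk hp
  have : CharP (AddMonoidAlgebra (ZMod p) (ZMod p)) p := charP_of_injective_algebraMap' (ZMod p) p
  set g : AddMonoidAlgebra (ZMod p) (ZMod p) := .single 1 1
  have hg (m : ℕ) : g ^ m = .single (m : ZMod p) 1 := by
    rw [AddMonoidAlgebra.single_pow, one_pow, nsmul_one]
  let ε := (Finsupp.applyAddHom (0 : ZMod p)).comp
    (AddMonoidAlgebra.coeffAddEquiv (R := ZMod p)).toAddMonoidHom
  have hε (m : ℕ) : ε (g ^ m) = if p ∣ m then 1 else 0 := by
    simp [ε, hg, AddMonoidAlgebra.coeffAddEquiv, AddMonoidAlgebra.coeff_single,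
      Finsupp.single_apply, ZMod.natCast_eq_zero_iff]
  have hnil : (g - 1) ^ n = 0 := by
    rw [← Nat.add_sub_cancel' hn, pow_add, sub_pow_char g 1 (p := p), hg, ZMod.natCast_self,
      one_pow, ← AddMonoidAlgebra.one_def, sub_self, zero_mul]
  have := map_sub_one_pow_mul_self ε hε n
  rwa [hnil, zero_mul, map_zero, zsmul_one, eq_comm, ZMod.intCast_zmod_eq_zero_iff_dvd] at this

namespace IsPrimitiveRoot

variable {R : Type*} [CommRing R] [IsDomain R] {k : ℕ} {ζ : R}

lemma geom_sum_pow (hζ : IsPrimitiveRoot ζ k) (m : ℕ) :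
    ∑ i ∈ range k, (ζ ^ m) ^ i = if k ∣ m then (k : R) else 0 := by
  split_ifs with h
  · simp [(hζ.pow_eq_one_iff_dvd m).mpr h]
  · have hne : ζ ^ m - 1 ≠ 0 := sub_ne_zero.mpr fun h' => h ((hζ.pow_eq_one_iff_dvd m).mp h')
    apply (mul_left_inj' hne).mp
    rw [geom_sum_mul, ← pow_mul, mul_comm, pow_mul, hζ.pow_eq_one, one_pow, sub_self, zero_mul]

lemma sum_sub_one_pow_mul (hζ : IsPrimitiveRoot ζ k) (n : ℕ) :
    ∑ i ∈ range k, (ζ ^ i - 1) ^ n * ζ ^ i = (multisectionSum k n : R) * k := by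
  let ε := ∑ i ∈ range k, Pi.evalAddMonoidHom (fun _ : ℕ => R) i
  have hε (m : ℕ) : ε ((fun i => ζ ^ i) ^ m) = if k ∣ m then (k : R) else 0 := by
    simp only [ε, AddMonoidHom.finsetSum_apply, Pi.evalAddMonoidHom_apply, Pi.pow_apply,
      ← hζ.geom_sum_pow m]
    exact sum_congr rfl fun i _ => pow_right_comm ζ i m
  simpa [ε, AddMonoidHom.finsetSum_apply, zsmul_eq_mul] using map_sub_one_pow_mul_self ε hε n

end IsPrimitiveRoot

theorem primitiveRoot_sum_pow_general
    (R : Type*) [CommRing R] [IsDomain R]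
    (p : ℕ) (hp : p.Prime) (ζ : R) (hζ : IsPrimitiveRoot ζ p) :
    (∀ n : ℕ, n ≤ p - 2 →
        ∑ i ∈ range p, (ζ ^ i - 1) ^ n * ζ ^ i = 0) ∧
    (∑ i ∈ range p, (ζ ^ i - 1) ^ (p - 1) * ζ ^ i = (p : R)) ∧
    (∀ n : ℕ, p ≤ n →
        ∃ m : ℤ, ∑ i ∈ range p, (ζ ^ i - 1) ^ n * ζ ^ i = ((p : ℤ) ^ 2 * m : ℤ)) := by
  have h2 := hp.two_le
  refine ⟨fun n hn => ?_, ?_, fun n hn => ?_⟩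
  · rw [hζ.sum_sub_one_pow_mul, multisectionSum_eq_zero (by omega), Int.cast_zero, zero_mul]
  · rw [hζ.sum_sub_one_pow_mul, multisectionSum_sub_one hp.pos, Int.cast_one, one_mul]
  · obtain ⟨m, hm⟩ := prime_dvd_multisectionSum hp hn
    exact ⟨m, by rw [hζ.sum_sub_one_pow_mul, hm]; push_cast; ring⟩

/-- For `ζ` a primitive `p`-th root of unity in a characteristic-zero domain,
the sums `S(n) = Σ_{i=0}^{p−1} (ζⁱ − 1)ⁿ ζⁱ` satisfy `S(n) = 0` for
`n = 0, …, p−2`, `S(p−1) = p`, and for `n ≥ p`, `S(n)` is an integer divisible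
by `p²`. -/
theorem primitiveRoot_sum_pow
    (R : Type*) [CommRing R] [IsDomain R] [CharZero R]
    (p : ℕ) (hp : p.Prime) (ζ : R) (hζ : IsPrimitiveRoot ζ p) :
    (∀ n : ℕ, n ≤ p - 2 →
        ∑ i ∈ range p, (ζ ^ i - 1) ^ n * ζ ^ i = 0) ∧
    (∑ i ∈ range p, (ζ ^ i - 1) ^ (p - 1) * ζ ^ i = (p : R)) ∧
    (∀ n : ℕ, p ≤ n →
        ∃ m : ℤ, ∑ i ∈ range p, (ζ ^ i - 1) ^ n * ζ ^ i = ((p : ℤ) ^ 2 * m : ℤ)) :=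
  primitiveRoot_sum_pow_general R p hp ζ hζ
end

section
/- Let K be a complete nonarchimedean field of characteristic zero equipped with a bounded derivation ∂ of finite operator norm, and let V be a nonzero finite-dimensional ∂-differential module over K. For exact sequences: if 0 → V₁ → V → V₂ → 0 is exact with V₁, V₂ nonzero, then |∂|_{sp,V} = max{ |∂|_{sp,V₁}, |∂|_{sp,V₂} }, where |∂|_{sp,W} = lim_{n→∞} |∂ⁿ|_W^{1/n} is the spectral norm of ∂ on W computed with respect to any K-compatible norm on W. -/
open Filter

/-- A `K`-compatible (nonarchimedean) norm on a `K`-vector space `V`. -/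
structure IsCompatibleNorm (K : Type*) [NormedField K]
    (V : Type*) [AddCommGroup V] [Module K V] (N : V → ℝ) : Prop where
  nonneg : ∀ v, 0 ≤ N v
  eq_zero_iff : ∀ v, N v = 0 ↔ v = 0
  add_le : ∀ v w, N (v + w) ≤ max (N v) (N w)
  smul : ∀ (a : K) (v : V), N (a • v) = ‖a‖ * N v

/-- The operator norm of a map `f : V → V` with respect to a norm `N`. -/
noncomputable def opNormN {V : Type*} (N : V → ℝ) (f : V → V) : ℝ :=
  ⨆ v : {v : V // N v ≠ 0}, N (f v.1) / N v.1

/-- The spectral norm `|D|_{sp,V} = lim_n |Dⁿ|^{1/n}` (as a `limsup`). -/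
noncomputable def spectralNormN {V : Type*} (N : V → ℝ) (D : V → V) : ℝ :=
  limsup (fun n : ℕ => (opNormN N (D^[n])) ^ ((n : ℝ)⁻¹)) atTop

/-!
All `K`-compatible norms on a finite-dimensional space are equivalent (over a trivially valued `K`
because such a norm takes only finitely many values), so `K`-linear maps are bounded, and so is
`D`: on a basis, `D (∑ aᵢ • bᵢ) = ∑ (∂ aᵢ • bᵢ + aᵢ • D bᵢ)` with `|∂|_K < ∞`.
The iterates of `D₁` and `D₂` are compressions `π ∘ Dⁿ ∘ f` and `g ∘ Dⁿ ∘ σ` of those of `D`,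
which gives `≥`. Conversely, a splitting `f ∘ π + σ ∘ g = id` makes `D` upper triangular,
`D (σ y) = σ (D₂ y) + f (E y)`, so `Dⁿ (σ y) = σ (D₂ⁿ y) + ∑_{i+j=n-1} f (D₁ⁱ (E (D₂ʲ y)))`; by
the ultrametric inequality this is `O(cⁿ)` for every `c` above both spectral norms.
-/

open Function Finset Topology

namespace IsCompatibleNorm

variable {K : Type*} [NormedField K] {V : Type*} [AddCommGroup V] [Module K V] {N : V → ℝ}

theorem map_zero (hN : IsCompatibleNorm K V N) : N 0 = 0 := (hN.eq_zero_iff 0).mpr rfl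

theorem map_neg (hN : IsCompatibleNorm K V N) (v : V) : N (-v) = N v := by
  simpa using hN.smul (-1) v

theorem pos (hN : IsCompatibleNorm K V N) {v : V} (hv : v ≠ 0) : 0 < N v :=
  (hN.nonneg v).lt_of_ne' ((hN.eq_zero_iff v).not.mpr hv)

theorem add_eq_left_of_lt (hN : IsCompatibleNorm K V N) {v w : V} (h : N w < N v) :
    N (v + w) = N v := by
  refine le_antisymm ((hN.add_le v w).trans (max_le le_rfl h.le)) ?_
  have := hN.add_le (v + w) (-w)
  rw [add_neg_cancel_right, hN.map_neg] at this
  exact (le_max_iff.mp this).resolve_right h.not_ge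

theorem sum_le (hN : IsCompatibleNorm K V N) {ι : Type*} (s : Finset ι) (x : ι → V) {B : ℝ}
    (hB : 0 ≤ B) (h : ∀ i ∈ s, N (x i) ≤ B) : N (∑ i ∈ s, x i) ≤ B := by
  classical
  induction s using Finset.induction_on with
  | empty => simpa [hN.map_zero] using hB
  | insert j s hj ih =>
    rw [sum_insert hj]
    exact (hN.add_le _ _).trans (max_le (h j (mem_insert_self j s))
      (ih fun i hi => h i (mem_insert_of_mem hi)))

theorem sum_lt (hN : IsCompatibleNorm K V N) {ι : Type*} (s : Finset ι) (x : ι → V) {B : ℝ}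
    (hB : 0 < B) (h : ∀ i ∈ s, N (x i) < B) : N (∑ i ∈ s, x i) < B := by
  classical
  induction s using Finset.induction_on with
  | empty => simpa [hN.map_zero] using hB
  | insert j s hj ih =>
    rw [sum_insert hj]
    exact (hN.add_le _ _).trans_lt (max_lt (h j (mem_insert_self j s))
      (ih fun i hi => h i (mem_insert_of_mem hi)))

abbrev toNormedAddCommGroup (hN : IsCompatibleNorm K V N) : NormedAddCommGroup V :=
  AddGroupNorm.toNormedAddCommGroup
    { toFun := N
      map_zero' := hN.map_zero
      add_le' := fun v w => (hN.add_le v w).trans (max_le_add_of_nonneg (hN.nonneg v) (hN.nonneg w))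
      neg' := hN.map_neg
      eq_zero_of_map_eq_zero' := fun v => (hN.eq_zero_iff v).mp }

end IsCompatibleNorm

theorem isCompatibleNorm_norm {K : Type*} [NormedField K] [IsUltrametricDist K] :
    IsCompatibleNorm K K (‖·‖) where
  nonneg := norm_nonneg
  eq_zero_iff _ := norm_eq_zero
  add_le := IsUltrametricDist.norm_add_le_max
  smul := norm_mul

section NormBounded

variable {V W X : Type*}

def NormBoundedBy (N : V → ℝ) (M : W → ℝ) (C : ℝ) (f : V → W) : Prop :=
  0 ≤ C ∧ ∀ v, M (f v) ≤ C * N v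

def NormBounded (N : V → ℝ) (M : W → ℝ) (f : V → W) : Prop :=
  ∃ C, NormBoundedBy N M C f

variable {N : V → ℝ} {M : W → ℝ} {P : X → ℝ} {C C' : ℝ}

theorem NormBoundedBy.comp {g : W → X} {f : V → W} (hg : NormBoundedBy M P C g)
    (hf : NormBoundedBy N M C' f) : NormBoundedBy N P (C * C') (g ∘ f) :=
  ⟨mul_nonneg hg.1 hf.1, fun v => (hg.2 (f v)).trans <| by
    rw [mul_assoc]; exact mul_le_mul_of_nonneg_left (hf.2 v) hg.1⟩

theorem NormBounded.comp {g : W → X} {f : V → W} (hg : NormBounded M P g)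
    (hf : NormBounded N M f) : NormBounded N P (g ∘ f) :=
  let ⟨_, hg⟩ := hg; let ⟨_, hf⟩ := hf; ⟨_, hg.comp hf⟩

theorem NormBoundedBy.mono (hN : ∀ v, 0 ≤ N v) {f : V → W} (hf : NormBoundedBy N M C f)
    (hC : C ≤ C') : NormBoundedBy N M C' f :=
  ⟨hf.1.trans hC, fun v => (hf.2 v).trans (mul_le_mul_of_nonneg_right hC (hN v))⟩

theorem NormBoundedBy.iterate {F : V → V} (hF : NormBoundedBy N N C F) (n : ℕ) :
    NormBoundedBy N N (C ^ n) F^[n] := by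
  induction n with
  | zero => exact ⟨zero_le_one, fun v => by simp⟩
  | succ n ih => rw [iterate_succ', pow_succ']; exact hF.comp ih

variable {K : Type*} [NormedField K] [AddCommGroup W] [Module K W]

theorem NormBoundedBy.add (hM : IsCompatibleNorm K W M) {f g : V → W}
    (hf : NormBoundedBy N M C f) (hg : NormBoundedBy N M C g) :
    NormBoundedBy N M C fun v => f v + g v :=
  ⟨hf.1, fun v => (hM.add_le _ _).trans (max_le (hf.2 v) (hg.2 v))⟩

theorem NormBoundedBy.sum (hN : ∀ v, 0 ≤ N v) (hM : IsCompatibleNorm K W M) {ι : Type*}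
    (s : Finset ι) {F : ι → V → W} (hC : 0 ≤ C) (hF : ∀ i ∈ s, NormBoundedBy N M C (F i)) :
    NormBoundedBy N M C fun v => ∑ i ∈ s, F i v :=
  ⟨hC, fun v => hM.sum_le s _ (mul_nonneg hC (hN v)) fun i hi => (hF i hi).2 v⟩

end NormBounded

section TrivialValuation

variable {K : Type*} [NormedField K] {V W : Type*} [AddCommGroup V] [Module K V]
  [AddCommGroup W] [Module K W] {N : V → ℝ} {M : W → ℝ}

theorem norm_eq_one_of_forall_norm_le_one (htriv : ∀ a : K, ‖a‖ ≤ 1) {a : K} (ha : a ≠ 0) :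
    ‖a‖ = 1 := by
  have h : ‖a‖ * ‖a⁻¹‖ = 1 := by rw [← norm_mul, mul_inv_cancel₀ ha, norm_one]
  nlinarith [htriv a, htriv a⁻¹, norm_nonneg a, norm_nonneg a⁻¹]

/-- In a nontrivial combination the term of largest norm dominates strictly, since every nonzero
scalar has norm `1`. -/
theorem IsCompatibleNorm.linearIndependent (htriv : ∀ a : K, ‖a‖ ≤ 1)
    (hN : IsCompatibleNorm K V N) {ι : Type*} {v : ι → V} (hv : ∀ i, v i ≠ 0)
    (hinj : Injective (N ∘ v)) : LinearIndependent K v := by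
  classical
  rw [linearIndependent_iff']
  intro s a hsum i hi
  by_contra hai
  set t := s.filter (a · ≠ 0)
  obtain ⟨j, hjt, hjmax⟩ := t.exists_max_image (N ∘ v) ⟨i, mem_filter.mpr ⟨hi, hai⟩⟩
  have hterm : ∀ k ∈ t, N (a k • v k) = N (v k) := fun k hk => by
    rw [hN.smul, norm_eq_one_of_forall_norm_le_one htriv (mem_filter.mp hk).2, one_mul]
  have hj : 0 < N (a j • v j) := hterm j hjt ▸ hN.pos (hv j)
  have hrest : N (∑ k ∈ t.erase j, a k • v k) < N (a j • v j) :=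
    hN.sum_lt _ _ hj fun k hk => by
      rw [hterm k (mem_of_mem_erase hk), hterm j hjt]
      exact (hjmax k (mem_of_mem_erase hk)).lt_of_ne fun h => ne_of_mem_erase hk (hinj h)
  have ht : ∑ k ∈ t, a k • v k = 0 := by
    rw [← hsum]
    exact sum_filter_of_ne fun k _ hk hak => hk (by rw [hak, zero_smul])
  rw [← add_sum_erase t _ hjt] at ht
  have := hN.add_eq_left_of_lt hrest
  rw [ht, hN.map_zero] at this
  exact hj.ne this

theorem IsCompatibleNorm.finite_image_ne_zero (htriv : ∀ a : K, ‖a‖ ≤ 1)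
    (hN : IsCompatibleNorm K V N) [FiniteDimensional K V] : (N '' {v | v ≠ 0}).Finite := by
  by_contra hinf
  have : Infinite (N '' {v | v ≠ 0}) := Set.infinite_coe_iff.mpr hinf
  choose v hv using fun r : N '' {v | v ≠ 0} => r.2
  refine Module.Finite.not_linearIndependent_of_infinite v
    (hN.linearIndependent htriv (fun r => (hv r).1) fun r s h => Subtype.ext ?_)
  simpa only [comp_apply, (hv r).2, (hv s).2] using h

theorem IsCompatibleNorm.exists_pos_le (htriv : ∀ a : K, ‖a‖ ≤ 1)
    (hN : IsCompatibleNorm K V N) [FiniteDimensional K V] : ∃ c > 0, ∀ v ≠ 0, c ≤ N v := by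
  obtain ⟨c, hc, hmin⟩ := Set.exists_min_image (insert 1 (N '' {v | v ≠ 0})) id
    ((hN.finite_image_ne_zero htriv).insert 1) (Set.insert_nonempty _ _)
  refine ⟨c, ?_, fun v hv => hmin _ (Set.mem_insert_of_mem _ ⟨v, hv, rfl⟩)⟩
  rcases hc with rfl | ⟨w, hw, rfl⟩
  exacts [one_pos, hN.pos hw]

theorem IsCompatibleNorm.exists_forall_le (htriv : ∀ a : K, ‖a‖ ≤ 1)
    (hM : IsCompatibleNorm K W M) [FiniteDimensional K V] (L : V →ₗ[K] W) :
    ∃ C, 0 ≤ C ∧ ∀ v, M (L v) ≤ C := by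
  let b := Module.finBasis K V
  have hC : 0 ≤ ∑ i, M (L (b i)) := sum_nonneg fun i _ => hM.nonneg _
  refine ⟨_, hC, fun v => ?_⟩
  rw [← b.sum_repr v, map_sum]
  refine hM.sum_le _ _ hC fun i _ => ?_
  rw [map_smul, hM.smul]
  exact (mul_le_of_le_one_left (hM.nonneg _) (htriv _)).trans
    (single_le_sum (fun j _ => hM.nonneg (L (b j))) (mem_univ i))

end TrivialValuation

theorem LinearMap.normBounded {K : Type*} [NormedField K] [CompleteSpace K]
    {V W : Type*} [AddCommGroup V] [Module K V] [FiniteDimensional K V]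
    [AddCommGroup W] [Module K W] {N : V → ℝ} {M : W → ℝ}
    (hN : IsCompatibleNorm K V N) (hM : IsCompatibleNorm K W M) (L : V →ₗ[K] W) :
    NormBounded N M L := by
  by_cases htriv : ∀ a : K, ‖a‖ ≤ 1
  · obtain ⟨c, hc, hcN⟩ := hN.exists_pos_le htriv
    obtain ⟨C, hC, hCM⟩ := hM.exists_forall_le htriv L
    refine ⟨C / c, by positivity, fun v => ?_⟩
    rcases eq_or_ne v 0 with rfl | hv
    · simp [hM.map_zero, hN.map_zero]
    · rw [div_mul_eq_mul_div, le_div_iff₀ hc]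
      exact (mul_le_mul_of_nonneg_right (hCM v) hc.le).trans
        (mul_le_mul_of_nonneg_left (hcN v hv) hC)
  · obtain ⟨a, ha⟩ := not_forall.mp htriv
    let : NontriviallyNormedField K := { ‹NormedField K› with non_trivial := ⟨a, not_le.mp ha⟩ }
    let := hN.toNormedAddCommGroup
    let := hM.toNormedAddCommGroup
    let : NormedSpace K V := ⟨fun a v => (hN.smul a v).le⟩
    let : NormedSpace K W := ⟨fun a v => (hM.smul a v).le⟩
    obtain ⟨C, hC, hb⟩ := SemilinearMapClass.bound_of_continuous L L.continuous_of_finiteDimensional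
    exact ⟨C, hC.le, hb⟩

theorem LinearMap.exists_splitting_of_exact {R : Type*} [DivisionRing R] {V₁ V V₂ : Type*}
    [AddCommGroup V₁] [Module R V₁] [AddCommGroup V] [Module R V] [AddCommGroup V₂] [Module R V₂]
    {f : V₁ →ₗ[R] V} {g : V →ₗ[R] V₂} (hf : Injective f) (hg : Surjective g)
    (hfg : range f = ker g) :
    ∃ (π : V →ₗ[R] V₁) (σ : V₂ →ₗ[R] V),
      (∀ x, π (f x) = x) ∧ (∀ y, g (σ y) = y) ∧ ∀ v, f (π v) + σ (g v) = v := by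
  obtain ⟨s, hs⟩ := g.exists_rightInverse_of_surjective (range_eq_top.mpr hg)
  obtain ⟨e, hfe, hge⟩ :=
    (LinearMap.exact_iff.mpr hfg.symm).splitSurjectiveEquiv hf ⟨s, hs⟩
  refine ⟨fst R V₁ V₂ ∘ₗ e, e.symm ∘ₗ inr R V₁ V₂, fun x => ?_, fun y => ?_, fun v => ?_⟩
  all_goals simp [hfe, hge, ← map_add]

section Derivation

variable {K : Type*} {V : Type*} [AddCommGroup V]

def IsDerivationOver [Ring K] [Module K V] (d : K → K) (D : V → V) : Prop :=
  ∀ (a : K) (v w : V), D (a • v + w) = d a • v + a • D v + D w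

namespace IsDerivationOver

variable [Ring K] [Module K V] {d : K → K} {D : V → V}

theorem map_add (hD : IsDerivationOver d D) (hmul : ∀ a b, d (a * b) = d a * b + a * d b)
    (v w : V) : D (v + w) = D v + D w := by
  have hd1 : d 1 = 0 := by simpa using hmul 1 1
  simpa [hd1] using hD 1 v w

theorem map_smul (hD : IsDerivationOver d D) (hmul : ∀ a b, d (a * b) = d a * b + a * d b)
    (a : K) (v : V) : D (a • v) = d a • v + a • D v := by
  have hD0 : D 0 = 0 := by simpa using hD.map_add hmul 0 0
  simpa [hD0] using hD a v 0

end IsDerivationOver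

theorem IsDerivationOver.normBounded [NormedField K] [CompleteSpace K] [IsUltrametricDist K]
    [Module K V] [FiniteDimensional K V] {N : V → ℝ} {d : K → K} {D : V → V}
    (hN : IsCompatibleNorm K V N) (hmul : ∀ a b, d (a * b) = d a * b + a * d b)
    (hbdd : ∃ c : ℝ, ∀ x : K, ‖d x‖ ≤ c * ‖x‖) (hD : IsDerivationOver d D) :
    NormBounded N N D := by
  obtain ⟨c, hc⟩ := hbdd
  have hc0 : 0 ≤ c := by simpa using (norm_nonneg _).trans (hc 1)
  let b := Module.finBasis K V
  choose C hC using fun i => (b.coord i).normBounded hN isCompatibleNorm_norm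
  let B i := (c * N (b i) + N (D (b i))) * C i
  have hB : ∀ i, 0 ≤ B i := fun i => by
    have := (hC i).1
    have := hN.nonneg (b i)
    have := hN.nonneg (D (b i))
    positivity
  have hterm : ∀ i, NormBoundedBy N N (B i) fun v => D (b.repr v i • b i) := fun i =>
    ⟨hB i, fun v => by
      set r := b.repr v i
      have hb := hN.nonneg (b i)
      have hDb := hN.nonneg (D (b i))
      have hr := norm_nonneg r
      calc N (D (r • b i)) ≤ max (‖d r‖ * N (b i)) (‖r‖ * N (D (b i))) := by
            rw [hD.map_smul hmul, ← hN.smul, ← hN.smul]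
            exact hN.add_le _ _
        _ ≤ (c * N (b i) + N (D (b i))) * ‖r‖ := by
            refine max_le ?_ (by nlinarith [mul_nonneg (mul_nonneg hc0 hb) hr])
            nlinarith [mul_le_mul_of_nonneg_right (hc r) hb]
        _ ≤ (c * N (b i) + N (D (b i))) * (C i * N v) := by gcongr; exact (hC i).2 v
        _ = B i * N v := (mul_assoc _ _ _).symm⟩
  have hsum : D = fun v => ∑ i, D (b.repr v i • b i) := funext fun v => by
    conv_lhs => rw [← b.sum_repr v]
    exact map_sum (AddMonoidHom.mk' D (hD.map_add hmul)) _ _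
  refine ⟨∑ i, B i, hsum ▸ NormBoundedBy.sum hN.nonneg hN _ (sum_nonneg fun i _ => hB i)
    fun i _ => (hterm i).mono hN.nonneg (single_le_sum (fun j _ => hB j) (mem_univ i))⟩

end Derivation

section RootGrowth

variable {q : ℕ → ℝ}

theorem tendsto_rpow_inv_natCast_one {A : ℝ} (hA : 0 < A) :
    Tendsto (fun n : ℕ => A ^ (n : ℝ)⁻¹) atTop (𝓝 1) := by
  have h := ((Real.continuousAt_const_rpow hA.ne').tendsto.comp
    (tendsto_inv_atTop_zero.comp tendsto_natCast_atTop_atTop))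
  rwa [Real.rpow_zero] at h

theorem eventually_rpow_inv_le_add (hq : ∀ n, 0 ≤ q n) {A c δ : ℝ} (hc : 0 ≤ c)
    (h : ∀ n, q n ≤ A * c ^ n) (hδ : 0 < δ) : ∀ᶠ n : ℕ in atTop, q n ^ (n : ℝ)⁻¹ ≤ c + δ := by
  have hA : 0 < max A 1 := lt_max_of_lt_right one_pos
  have hlim : Tendsto (fun n : ℕ => max A 1 ^ (n : ℝ)⁻¹ * c) atTop (𝓝 c) := by
    simpa using (tendsto_rpow_inv_natCast_one hA).mul_const c
  filter_upwards [hlim.eventually (eventually_le_nhds (lt_add_of_pos_right c hδ)),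
    eventually_ne_atTop 0] with n hn hn0
  calc q n ^ (n : ℝ)⁻¹ ≤ (max A 1 * c ^ n) ^ (n : ℝ)⁻¹ := by
        gcongr
        · exact hq n
        · exact (h n).trans (by gcongr; exact le_max_left A 1)
    _ = max A 1 ^ (n : ℝ)⁻¹ * c := by
        rw [Real.mul_rpow hA.le (pow_nonneg hc n), Real.pow_rpow_inv_natCast hc hn0]
    _ ≤ c + δ := hn

theorem limsup_rpow_inv_le (hq : ∀ n, 0 ≤ q n) {A c : ℝ} (hc : 0 ≤ c)
    (h : ∀ n, q n ≤ A * c ^ n) : limsup (fun n : ℕ => q n ^ (n : ℝ)⁻¹) atTop ≤ c :=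
  le_of_forall_pos_le_add fun _ hδ =>
    limsup_le_of_le (isCoboundedUnder_le_of_eventually_le atTop
      (Eventually.of_forall fun n => Real.rpow_nonneg (hq n) _))
      (eventually_rpow_inv_le_add hq hc h hδ)

theorem isBoundedUnder_rpow_inv (hq : ∀ n, 0 ≤ q n) {A c : ℝ} (hc : 0 ≤ c)
    (h : ∀ n, q n ≤ A * c ^ n) :
    IsBoundedUnder (· ≤ ·) atTop fun n : ℕ => q n ^ (n : ℝ)⁻¹ :=
  isBoundedUnder_of_eventually_le (eventually_rpow_inv_le_add hq hc h one_pos)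

theorem limsup_rpow_inv_nonneg (hq : ∀ n, 0 ≤ q n)
    (hb : IsBoundedUnder (· ≤ ·) atTop fun n : ℕ => q n ^ (n : ℝ)⁻¹) :
    0 ≤ limsup (fun n : ℕ => q n ^ (n : ℝ)⁻¹) atTop :=
  le_limsup_of_frequently_le (Frequently.of_forall fun n => Real.rpow_nonneg (hq n) _) hb

theorem exists_le_mul_pow_of_limsup_rpow_inv_lt (hq : ∀ n, 0 ≤ q n)
    (hb : IsBoundedUnder (· ≤ ·) atTop fun n : ℕ => q n ^ (n : ℝ)⁻¹) {s : ℝ}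
    (hs : limsup (fun n : ℕ => q n ^ (n : ℝ)⁻¹) atTop < s) :
    ∃ A, 0 ≤ A ∧ ∀ n, q n ≤ A * s ^ n := by
  have hs0 : 0 < s := (limsup_rpow_inv_nonneg hq hb).trans_lt hs
  obtain ⟨m, hm⟩ := eventually_atTop.mp ((eventually_lt_of_limsup_lt hs hb).and
    (eventually_ne_atTop 0))
  let A := 1 + ∑ k ∈ range m, q k / s ^ k
  have hA : 1 ≤ A := le_add_of_nonneg_right (sum_nonneg fun k _ => by have := hq k; positivity)
  refine ⟨A, zero_le_one.trans hA, fun n => ?_⟩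
  rcases lt_or_ge n m with hn | hn
  · calc q n = q n / s ^ n * s ^ n := by field_simp
      _ ≤ A * s ^ n := by
        gcongr
        exact (single_le_sum (f := fun k => q k / s ^ k) (fun k _ => by have := hq k; positivity)
          (mem_range.mpr hn)).trans (le_add_of_nonneg_left zero_le_one)
  · obtain ⟨hlt, hn0⟩ := hm n hn
    calc q n = (q n ^ (n : ℝ)⁻¹) ^ n := (Real.rpow_inv_natCast_pow (hq n) hn0).symm
      _ ≤ s ^ n := by gcongr; exact Real.rpow_nonneg (hq n) _
      _ ≤ A * s ^ n := le_mul_of_one_le_left (by positivity) hA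

end RootGrowth

section SpectralNorm

variable {V W : Type*} {N : V → ℝ} {M : W → ℝ} {F : V → V} {C c : ℝ}

def IterateGrowthLE (N : V → ℝ) (F : V → V) (c : ℝ) : Prop :=
  ∃ A, ∀ n, NormBoundedBy N N (A * c ^ n) F^[n]

theorem opNormN_nonneg (hN : ∀ v, 0 ≤ N v) : 0 ≤ opNormN N F :=
  Real.iSup_nonneg fun _ => div_nonneg (hN _) (hN _)

theorem opNormN_le (hN : ∀ v, 0 ≤ N v) (hF : NormBoundedBy N N C F) : opNormN N F ≤ C :=
  Real.iSup_le (fun v => div_le_of_le_mul₀ (hN _) hF.1 (hF.2 v)) hF.1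

theorem normBoundedBy_opNormN (hN : ∀ v, 0 ≤ N v) (hF : NormBoundedBy N N C F) :
    NormBoundedBy N N (opNormN N F) F := by
  refine ⟨opNormN_nonneg hN, fun v => ?_⟩
  rcases (hN v).eq_or_lt with hv | hv
  · simpa [← hv] using hF.2 v
  · have hbdd : BddAbove (Set.range fun w : {w : V // N w ≠ 0} => N (F w) / N w) :=
      ⟨C, Set.forall_mem_range.mpr fun w => div_le_of_le_mul₀ (hN _) hF.1 (hF.2 w)⟩
    rw [← div_le_iff₀ hv]
    exact le_ciSup hbdd ⟨v, hv.ne'⟩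

theorem NormBoundedBy.isBoundedUnder_opNormN_iterate (hN : ∀ v, 0 ≤ N v)
    (hF : NormBoundedBy N N C F) :
    IsBoundedUnder (· ≤ ·) atTop fun n : ℕ => opNormN N F^[n] ^ (n : ℝ)⁻¹ :=
  isBoundedUnder_rpow_inv (fun _ => opNormN_nonneg hN) hF.1 fun n =>
    (opNormN_le hN (hF.iterate n)).trans_eq (one_mul _).symm

theorem spectralNormN_nonneg (hN : ∀ v, 0 ≤ N v) (hF : NormBounded N N F) :
    0 ≤ spectralNormN N F :=
  let ⟨_, hC⟩ := hF
  limsup_rpow_inv_nonneg (fun _ => opNormN_nonneg hN) (hC.isBoundedUnder_opNormN_iterate hN)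

theorem spectralNormN_le_of_forall_iterateGrowthLE (hN : ∀ v, 0 ≤ N v) (hc : 0 ≤ c)
    (h : ∀ ε > 0, IterateGrowthLE N F (c + ε)) : spectralNormN N F ≤ c :=
  le_of_forall_pos_le_add fun ε hε =>
    let ⟨_, hA⟩ := h ε hε
    limsup_rpow_inv_le (fun _ => opNormN_nonneg hN) (by positivity) fun n => opNormN_le hN (hA n)

theorem NormBounded.iterateGrowthLE_of_spectralNormN_lt (hN : ∀ v, 0 ≤ N v)
    (hF : NormBounded N N F) {s : ℝ} (hs : spectralNormN N F < s) : IterateGrowthLE N F s := by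
  obtain ⟨C, hC⟩ := hF
  obtain ⟨A, -, hA⟩ := exists_le_mul_pow_of_limsup_rpow_inv_lt (fun _ => opNormN_nonneg hN)
    (hC.isBoundedUnder_opNormN_iterate hN) hs
  exact ⟨A, fun n => (normBoundedBy_opNormN hN (hC.iterate n)).mono hN (hA n)⟩

theorem spectralNormN_le_of_iterate_eq (hN : ∀ v, 0 ≤ N v) (hM : ∀ w, 0 ≤ M w)
    (hF : NormBounded N N F) {G : W → W} {i : W → V} {p : V → W} (hi : NormBounded M N i)
    (hp : NormBounded N M p) (h : ∀ n w, G^[n] w = p (F^[n] (i w))) :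
    spectralNormN M G ≤ spectralNormN N F := by
  refine spectralNormN_le_of_forall_iterateGrowthLE hM (spectralNormN_nonneg hN hF) fun ε hε => ?_
  obtain ⟨A, hA⟩ := hF.iterateGrowthLE_of_spectralNormN_lt hN (lt_add_of_pos_right _ hε)
  obtain ⟨Ci, hi⟩ := hi
  obtain ⟨Cp, hp⟩ := hp
  refine ⟨Cp * A * Ci, fun n => ?_⟩
  rw [funext (h n)]
  exact (hp.comp ((hA n).comp hi)).mono hM (le_of_eq (by ring))

end SpectralNorm

section Triangular

variable {V V₁ V₂ : Type*} {D : V → V} {D₁ : V₁ → V₁} {D₂ : V₂ → V₂}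
  {f : V₁ → V} {σ : V₂ → V} {E : V₂ → V₁}

theorem iterate_map_add_of_map_add [Add V] (hD : ∀ v w, D (v + w) = D v + D w) (n : ℕ)
    (v w : V) : D^[n] (v + w) = D^[n] v + D^[n] w :=
  iterate_map_add (⟨D, hD⟩ : AddHom V V) n v w

theorem iterate_apply_eq_add_sum_of_triangular [AddCommMonoid V]
    (hD : ∀ v w, D (v + w) = D v + D w) (hf : Semiconj f D₁ D)
    (hσ : ∀ y, D (σ y) = σ (D₂ y) + f (E y)) (n : ℕ) (y : V₂) :
    D^[n] (σ y) = σ (D₂^[n] y) + ∑ k ∈ range n, f (D₁^[n - 1 - k] (E (D₂^[k] y))) := by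
  induction n generalizing y with
  | zero => simp
  | succ n ih =>
    rw [iterate_succ_apply, hσ, iterate_map_add_of_map_add hD, ih, ← hf.iterate_right n,
      sum_range_succ', iterate_succ_apply, add_assoc]
    simp [Nat.sub_sub, add_comm]

variable {K : Type*} [NormedField K] [AddCommGroup V] [Module K V] {N : V → ℝ}
  {N₁ : V₁ → ℝ} {N₂ : V₂ → ℝ} {π : V → V₁} {g : V → V₂} {c : ℝ}

/-- The ultrametric inequality bounds `D^[n] (σ y)` by the largest of the `n + 1` terms of
`iterate_apply_eq_add_sum_of_triangular`, each of size `O(c ^ n)`, so no factor `n` appears. -/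
theorem IterateGrowthLE.of_triangular (hN : IsCompatibleNorm K V N) (hN₂ : ∀ y, 0 ≤ N₂ y)
    (hD : ∀ v w, D (v + w) = D v + D w) (hDf : Semiconj f D₁ D)
    (hDσ : ∀ y, D (σ y) = σ (D₂ y) + f (E y)) (hsplit : ∀ v, f (π v) + σ (g v) = v)
    (hf : NormBounded N₁ N f) (hσ : NormBounded N₂ N σ) (hE : NormBounded N₂ N₁ E)
    (hπ : NormBounded N N₁ π) (hg : NormBounded N N₂ g) (hc : 0 < c)
    (h₁ : IterateGrowthLE N₁ D₁ c) (h₂ : IterateGrowthLE N₂ D₂ c) : IterateGrowthLE N D c := by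
  obtain ⟨A₁, hA₁⟩ := h₁
  obtain ⟨A₂, hA₂⟩ := h₂
  obtain ⟨Cf, hf⟩ := hf
  obtain ⟨Cσ, hσ⟩ := hσ
  obtain ⟨CE, hE⟩ := hE
  obtain ⟨Cπ, hπ⟩ := hπ
  obtain ⟨Cg, hg⟩ := hg
  have hA₁0 : 0 ≤ A₁ := by simpa using (hA₁ 0).1
  have hA₂0 : 0 ≤ A₂ := by simpa using (hA₂ 0).1
  have hCf := hf.1
  have hCσ := hσ.1
  have hCE := hE.1
  have hCπ := hπ.1
  have hCg := hg.1
  set B := Cσ * A₂ + Cf * A₁ * CE * A₂ / c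
  have hsection : ∀ n, NormBoundedBy N₂ N (B * c ^ n) fun y => D^[n] (σ y) := by
    intro n
    rw [funext (iterate_apply_eq_add_sum_of_triangular hD hDf hDσ n)]
    refine .add hN ((hσ.comp (hA₂ n)).mono hN₂ ?_) (.sum hN₂ hN _ (by positivity) fun k hk =>
      (hf.comp ((hA₁ _).comp (hE.comp (hA₂ k)))).mono hN₂ ?_)
    · calc Cσ * (A₂ * c ^ n) = Cσ * A₂ * c ^ n := by ring
        _ ≤ B * c ^ n := by gcongr; exact le_add_of_nonneg_right (by positivity)
    · have hpow : c ^ (n - 1 - k) * c ^ k * c = c ^ n := by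
        rw [← pow_add, ← pow_succ]
        congr 1
        have := mem_range.mp hk
        omega
      calc Cf * (A₁ * c ^ (n - 1 - k) * (CE * (A₂ * c ^ k)))
          = Cf * A₁ * CE * A₂ / c * (c ^ (n - 1 - k) * c ^ k * c) := by field_simp
        _ ≤ B * c ^ n := by rw [hpow]; gcongr; exact le_add_of_nonneg_left (by positivity)
  refine ⟨Cf * A₁ * Cπ + B * Cg, fun n => ?_⟩
  have hsplitn : D^[n] = fun v => f (D₁^[n] (π v)) + D^[n] (σ (g v)) := funext fun v => by
    conv_lhs => rw [← hsplit v]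
    rw [iterate_map_add_of_map_add hD, hDf.iterate_right n]
  rw [hsplitn]
  refine .add hN ((hf.comp ((hA₁ n).comp hπ)).mono hN.nonneg ?_)
    (((hsection n).comp hg).mono hN.nonneg ?_)
  · calc Cf * (A₁ * c ^ n * Cπ) = Cf * A₁ * Cπ * c ^ n := by ring
      _ ≤ _ := by gcongr; exact le_add_of_nonneg_right (by positivity)
  · calc B * c ^ n * Cg = B * Cg * c ^ n := by ring
      _ ≤ _ := by gcongr; exact le_add_of_nonneg_left (by positivity)

theorem spectralNormN_le_max_of_splitting (hN : IsCompatibleNorm K V N) (hN₁ : ∀ x, 0 ≤ N₁ x)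
    (hN₂ : ∀ y, 0 ≤ N₂ y) (hDb : NormBounded N N D) (hD₁b : NormBounded N₁ N₁ D₁)
    (hD₂b : NormBounded N₂ N₂ D₂) (hD : ∀ v w, D (v + w) = D v + D w)
    (hf : NormBounded N₁ N f) (hπ : NormBounded N N₁ π) (hσ : NormBounded N₂ N σ)
    (hg : NormBounded N N₂ g) (hsplit : ∀ v, f (π v) + σ (g v) = v) (hgσ : ∀ y, g (σ y) = y)
    (hfD : Semiconj f D₁ D) (hgD : Semiconj g D D₂) :
    spectralNormN N D ≤ max (spectralNormN N₁ D₁) (spectralNormN N₂ D₂) := by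
  have hDσ : ∀ y, D (σ y) = σ (D₂ y) + f (π (D (σ y))) := fun y => by
    conv_lhs => rw [← hsplit (D (σ y))]
    rw [hgD, hgσ, add_comm]
  have hmax : 0 ≤ max (spectralNormN N₁ D₁) (spectralNormN N₂ D₂) :=
    le_max_of_le_left (spectralNormN_nonneg hN₁ hD₁b)
  refine spectralNormN_le_of_forall_iterateGrowthLE hN.nonneg hmax fun ε hε => ?_
  exact IterateGrowthLE.of_triangular (E := fun y => π (D (σ y))) hN hN₂ hD hfD hDσ hsplit hf hσ
    (hπ.comp (hDb.comp hσ)) hπ hg (by positivity)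
    (hD₁b.iterateGrowthLE_of_spectralNormN_lt hN₁ ((le_max_left _ _).trans_lt (by linarith)))
    (hD₂b.iterateGrowthLE_of_spectralNormN_lt hN₂ ((le_max_right _ _).trans_lt (by linarith)))

end Triangular

theorem spectralNorm_exact_sequence_general
    (K : Type*) [NormedField K] [CompleteSpace K] [IsUltrametricDist K]
    (d : K → K)
    (hmul : ∀ a b : K, d (a * b) = d a * b + a * d b)
    (hbdd : ∃ c : ℝ, ∀ x : K, ‖d x‖ ≤ c * ‖x‖)
    (V V₁ V₂ : Type*)
    [AddCommGroup V] [Module K V] [FiniteDimensional K V]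
    [AddCommGroup V₁] [Module K V₁] [FiniteDimensional K V₁]
    [AddCommGroup V₂] [Module K V₂] [FiniteDimensional K V₂]
    (D : V → V) (D₁ : V₁ → V₁) (D₂ : V₂ → V₂)
    (hD : ∀ (a : K) (v w : V), D (a • v + w) = d a • v + a • D v + D w)
    (hD₁ : ∀ (a : K) (v w : V₁), D₁ (a • v + w) = d a • v + a • D₁ v + D₁ w)
    (hD₂ : ∀ (a : K) (v w : V₂), D₂ (a • v + w) = d a • v + a • D₂ v + D₂ w)
    (f : V₁ →ₗ[K] V) (g : V →ₗ[K] V₂)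
    (hf : Function.Injective f) (hg : Function.Surjective g)
    (hexact : LinearMap.range f = LinearMap.ker g)
    (hfD : ∀ v, f (D₁ v) = D (f v)) (hgD : ∀ v, g (D v) = D₂ (g v))
    (N : V → ℝ) (N₁ : V₁ → ℝ) (N₂ : V₂ → ℝ)
    (hN : IsCompatibleNorm K V N) (hN₁ : IsCompatibleNorm K V₁ N₁)
    (hN₂ : IsCompatibleNorm K V₂ N₂) :
    spectralNormN N D = max (spectralNormN N₁ D₁) (spectralNormN N₂ D₂) := by
  obtain ⟨π, σ, hπf, hgσ, hsplit⟩ := LinearMap.exists_splitting_of_exact hf hg hexact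
  have hDb : NormBounded N N D := IsDerivationOver.normBounded hN hmul hbdd hD
  have hD₁b : NormBounded N₁ N₁ D₁ := IsDerivationOver.normBounded hN₁ hmul hbdd hD₁
  have hD₂b : NormBounded N₂ N₂ D₂ := IsDerivationOver.normBounded hN₂ hmul hbdd hD₂
  have hfb := f.normBounded hN₁ hN
  have hπb := π.normBounded hN hN₁
  have hσb := σ.normBounded hN₂ hN
  have hgb := g.normBounded hN hN₂
  refine le_antisymm ?_ (max_le ?_ ?_)
  · exact spectralNormN_le_max_of_splitting hN hN₁.nonneg hN₂.nonneg hDb hD₁b hD₂b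
      (IsDerivationOver.map_add hD hmul) hfb hπb hσb hgb hsplit hgσ hfD hgD
  · exact spectralNormN_le_of_iterate_eq hN.nonneg hN₁.nonneg hDb hfb hπb
      fun n x => by rw [← Semiconj.iterate_right hfD n x, hπf]
  · exact spectralNormN_le_of_iterate_eq hN.nonneg hN₂.nonneg hDb hσb hgb
      fun n y => by rw [Semiconj.iterate_right hgD n (σ y), hgσ]

/-- Lemma (`L:basic-IR-prop`(a), spectral norm form): for an exact sequence
`0 → V₁ → V → V₂ → 0` of nonzero finite-dimensional differential modules over a
complete nonarchimedean differential field `(K, ∂)` of characteristic zero with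
`|∂|_K < ∞`, one has `|∂|_{sp,V} = max{|∂|_{sp,V₁}, |∂|_{sp,V₂}}`, the spectral
norms being computed with respect to (arbitrary) `K`-compatible norms. -/
theorem spectralNorm_exact_sequence
    (K : Type*) [NormedField K] [CompleteSpace K] [IsUltrametricDist K] [CharZero K]
    (d : K → K) (hadd : ∀ a b : K, d (a + b) = d a + d b)
    (hmul : ∀ a b : K, d (a * b) = d a * b + a * d b)
    (hbdd : ∃ c : ℝ, ∀ x : K, ‖d x‖ ≤ c * ‖x‖)
    (V V₁ V₂ : Type*)
    [AddCommGroup V] [Module K V] [FiniteDimensional K V]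
    [AddCommGroup V₁] [Module K V₁] [FiniteDimensional K V₁]
    [AddCommGroup V₂] [Module K V₂] [FiniteDimensional K V₂]
    (hV₁ : Nontrivial V₁) (hV₂ : Nontrivial V₂)
    (D : V → V) (D₁ : V₁ → V₁) (D₂ : V₂ → V₂)
    (hD : ∀ (a : K) (v w : V), D (a • v + w) = d a • v + a • D v + D w)
    (hD₁ : ∀ (a : K) (v w : V₁), D₁ (a • v + w) = d a • v + a • D₁ v + D₁ w)
    (hD₂ : ∀ (a : K) (v w : V₂), D₂ (a • v + w) = d a • v + a • D₂ v + D₂ w)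
    (f : V₁ →ₗ[K] V) (g : V →ₗ[K] V₂)
    (hf : Function.Injective f) (hg : Function.Surjective g)
    (hexact : LinearMap.range f = LinearMap.ker g)
    (hfD : ∀ v, f (D₁ v) = D (f v)) (hgD : ∀ v, g (D v) = D₂ (g v))
    (N : V → ℝ) (N₁ : V₁ → ℝ) (N₂ : V₂ → ℝ)
    (hN : IsCompatibleNorm K V N) (hN₁ : IsCompatibleNorm K V₁ N₁)
    (hN₂ : IsCompatibleNorm K V₂ N₂) :
    spectralNormN N D = max (spectralNormN N₁ D₁) (spectralNormN N₂ D₂) :=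
  spectralNorm_exact_sequence_general K d hmul hbdd V V₁ V₂ D D₁ D₂ hD hD₁ hD₂ f g hf hg hexact hfD
    hgD N N₁ N₂ hN hN₁ hN₂
end

section
/- Let K be a complete nonarchimedean field of characteristic zero with residue characteristic p, equipped with a bounded derivation ∂, and set ω = p^{−1/(p−1)} if p > 0 and ω = 1 if p = 0. Then for each positive integer n, the operator norm of ∂ⁿ/n! on K satisfies |∂ⁿ/n!|_K ≤ ω^{−n} |∂|_{sp,K}ⁿ. In particular (n = 1), |∂|_{sp,K} ≥ ω |∂|_K. -/
open Filter

/-- The operator norm of a map `f : K → K` on a normed field. -/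
noncomputable def opNorm {K : Type*} [NormedField K] (f : K → K) : ℝ :=
  ⨆ x : {x : K // x ≠ 0}, ‖f x.1‖ / ‖x.1‖

/-- The spectral norm `|∂|_{sp,K} = lim_n |∂ⁿ|_K^{1/n}` (as a `limsup`, which equals
the limit when the limit exists). -/
noncomputable def spectralNorm' {K : Type*} [NormedField K] (d : K → K) : ℝ :=
  limsup (fun n : ℕ => (opNorm (d^[n])) ^ ((n : ℝ)⁻¹)) atTop

/-!
Write `∂⁽ᵏ⁾ = ∂ᵏ/k!`. By the Leibniz rule `∂⁽ᵏ⁾(xy) = ∑_{i+j=k} ∂⁽ⁱ⁾x ∂⁽ʲ⁾y`, so the Taylor map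
`x ↦ ∑ ∂⁽ᵏ⁾(x) Tᵏ` is multiplicative. For power series whose terms `‖aₖ‖ rᵏ` tend to zero, the
`r`-Gauss norm is super-multiplicative: the product of the last terms realising the two maxima
strictly dominates the rest of its Cauchy sum. Hence if `‖∂⁽ᵏ⁾‖ rᵏ → 0`, the Gauss norm `M` of the
Taylor series satisfies `M(x)ᵐ ≤ M(xᵐ) ≤ C ‖x‖ᵐ` for all `m`, so `M(x) ≤ ‖x‖`, i.e.
`‖∂⁽ⁿ⁾x‖ rⁿ ≤ ‖x‖`. Legendre's formula gives `|k!| ≥ ωᵏ`, and `|∂ᵏ| ≤ uᵏ` eventually for every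
`u > |∂|_sp`, so every `r < ω / |∂|_sp` qualifies; letting `r` tend to `ω / |∂|_sp` gives the bound.
-/

open Topology PowerSeries Finset Nat

lemma le_of_forall_pow_succ_le_mul_pow {a b C : ℝ} (hb : 0 ≤ b)
    (h : ∀ n : ℕ, a ^ (n + 1) ≤ C * b ^ (n + 1)) : a ≤ b := by
  by_contra! hba
  have ha : 0 < a := hb.trans_lt hba
  have hlim : Tendsto (fun n : ℕ => C * (b / a) ^ (n + 1)) atTop (𝓝 0) := by
    simpa using ((tendsto_pow_atTop_nhds_zero_of_lt_one (div_nonneg hb ha.le)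
      ((div_lt_one ha).mpr hba)).comp (tendsto_add_atTop_nat 1)).const_mul C
  obtain ⟨n, hn⟩ := (hlim.eventually_lt_const one_pos).exists
  refine hn.not_ge ?_
  rw [div_pow, ← mul_div_assoc, le_div_iff₀ (by positivity), one_mul]
  exact h n

lemma exists_last_max_of_tendsto_zero {u : ℕ → ℝ} (hu : Tendsto u atTop (𝓝 0)) {i₁ : ℕ}
    (hi₁ : 0 < u i₁) : ∃ i₀, (∀ i, u i ≤ u i₀) ∧ ∀ i, i₀ < i → u i < u i₀ := by
  obtain ⟨N, hN⟩ := eventually_atTop.mp (hu.eventually_lt_const hi₁)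
  have hi₁N : i₁ ∈ range N := mem_range.mpr (lt_of_not_ge fun h => lt_irrefl _ (hN i₁ h))
  obtain ⟨j, -, hj⟩ := (range N).exists_max_image u ⟨i₁, hi₁N⟩
  have htail : ∀ i, N ≤ i → u i < u j := fun i hi => (hN i hi).trans_le (hj i₁ hi₁N)
  have hmax : ∀ i, u i ≤ u j := fun i =>
    if hi : i < N then hj i (mem_range.mpr hi) else (htail i (not_lt.mp hi)).le
  have hS : BddAbove {i | u i = u j} :=
    ⟨N, fun i hi => le_of_not_ge fun h => (htail i h).ne hi⟩
  have hmem : u (sSup {i | u i = u j}) = u j :=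
    Nat.sSup_mem (s := {i | u i = u j}) ⟨j, rfl⟩ hS
  refine ⟨sSup {i | u i = u j}, fun i => (hmax i).trans hmem.ge, fun i hi => ?_⟩
  exact ((hmax i).lt_of_ne fun h => hi.not_ge (le_csSup hS h)).trans_eq hmem.symm

namespace PowerSeries

lemma exists_last_coeff_gaussNorm_eq {R : Type*} [NormedRing R] {c : ℝ} (hc : 0 < c) {f : R⟦X⟧}
    (hf0 : f ≠ 0) (hf : Tendsto (fun i => ‖coeff i f‖ * c ^ i) atTop (𝓝 0)) :
    ∃ i₀, ‖coeff i₀ f‖ * c ^ i₀ = gaussNorm (‖·‖) c f ∧ 0 < ‖coeff i₀ f‖ * c ^ i₀ ∧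
      ∀ i, i₀ < i → ‖coeff i f‖ * c ^ i < ‖coeff i₀ f‖ * c ^ i₀ := by
  obtain ⟨i₁, hi₁⟩ : ∃ i, coeff i f ≠ 0 := by
    by_contra! h
    exact hf0 (ext fun i => by simpa using h i)
  obtain ⟨i₀, hmax, hlast⟩ := exists_last_max_of_tendsto_zero hf
    (show 0 < ‖coeff i₁ f‖ * c ^ i₁ by positivity)
  refine ⟨i₀, ?_, (show 0 < ‖coeff i₁ f‖ * c ^ i₁ by positivity).trans_le (hmax i₁), hlast⟩
  rw [gaussNorm_eq]
  exact le_antisymm (le_ciSup hf.bddAbove_range i₀) (ciSup_le hmax)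

theorem gaussNorm_le_mul_of_tendsto {K : Type*} [NormedDivisionRing K] [IsUltrametricDist K]
    {c : ℝ} (hc : 0 < c) {f g : K⟦X⟧}
    (hf : Tendsto (fun i => ‖coeff i f‖ * c ^ i) atTop (𝓝 0))
    (hg : Tendsto (fun i => ‖coeff i g‖ * c ^ i) atTop (𝓝 0))
    (hfg : HasGaussNorm (‖·‖) c (f * g)) :
    gaussNorm (‖·‖) c f * gaussNorm (‖·‖) c g ≤ gaussNorm (‖·‖) c (f * g) := by
  rcases eq_or_ne f 0 with rfl | hf0
  · simp
  rcases eq_or_ne g 0 with rfl | hg0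
  · simp
  obtain ⟨i₀, hfi₀, hfpos, hflast⟩ := exists_last_coeff_gaussNorm_eq hc hf0 hf
  obtain ⟨j₀, hgj₀, hgpos, hglast⟩ := exists_last_coeff_gaussNorm_eq hc hg0 hg
  have hsplit : ∀ a b, a + b = i₀ + j₀ → ‖coeff a f * coeff b g‖ * c ^ (i₀ + j₀)
      = ‖coeff a f‖ * c ^ a * (‖coeff b g‖ * c ^ b) := fun a b h => by
    rw [norm_mul, ← h, pow_add]; ring
  have hdom : ‖coeff (i₀ + j₀) (f * g)‖ = ‖coeff i₀ f * coeff j₀ g‖ := by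
    rw [coeff_mul]
    refine IsNonarchimedean.apply_sum_eq_of_lt IsUltrametricDist.isNonarchimedean_norm
      (fun a : K => (norm_neg a).symm) (s := antidiagonal (i₀ + j₀)) (k := (i₀, j₀))
      (HasAntidiagonal.mem_antidiagonal.mpr rfl) ?_
    rintro ⟨i, j⟩ hij hne
    rw [HasAntidiagonal.mem_antidiagonal] at hij
    rw [← mul_lt_mul_iff_left₀ (pow_pos hc (i₀ + j₀))]
    have hmaxf := fun i => hfi₀ ▸ le_gaussNorm (‖·‖) c f hf.bddAbove_range i
    have hmaxg := fun j => hgj₀ ▸ le_gaussNorm (‖·‖) c g hg.bddAbove_range j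
    have key : ‖coeff i f‖ * c ^ i * (‖coeff j g‖ * c ^ j)
        < ‖coeff i₀ f‖ * c ^ i₀ * (‖coeff j₀ g‖ * c ^ j₀) := by
      obtain hi | hj : i₀ < i ∨ j₀ < j := by
        by_contra! h
        exact hne (Prod.ext (by omega) (by omega))
      · exact mul_lt_mul_of_nonneg_of_pos (hflast i hi) (hmaxg j) (by positivity) hgpos
      · exact mul_lt_mul_of_nonneg_of_pos' (hmaxf i) (hglast j hj) (by positivity) hfpos
    rwa [hsplit i j hij, hsplit i₀ j₀ rfl]
  rw [← hfi₀, ← hgj₀]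
  calc ‖coeff i₀ f‖ * c ^ i₀ * (‖coeff j₀ g‖ * c ^ j₀)
      = ‖coeff (i₀ + j₀) (f * g)‖ * c ^ (i₀ + j₀) := by rw [hdom, hsplit i₀ j₀ rfl]
    _ ≤ gaussNorm (‖·‖) c (f * g) := le_gaussNorm _ _ _ hfg _

end PowerSeries

def taylorSeries {R : Type*} [Semiring R] (D : ℕ → R → R) (x : R) : R⟦X⟧ :=
  PowerSeries.mk fun k => D k x

lemma taylorSeries_mul {R : Type*} [Semiring R] {D : ℕ → R → R}
    (hD : ∀ k x y, D k (x * y) = ∑ p ∈ antidiagonal k, D p.1 x * D p.2 y) (x y : R) :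
    taylorSeries D (x * y) = taylorSeries D x * taylorSeries D y := by
  ext k
  simp [taylorSeries, coeff_mul, hD]

theorem norm_mul_pow_le_of_tendsto {K : Type*} [NormedField K] [IsUltrametricDist K]
    {D : ℕ → K → K}
    (hD : ∀ k x y, D k (x * y) = ∑ p ∈ antidiagonal k, D p.1 x * D p.2 y)
    {r : ℝ} (hr : 0 < r) {t : ℕ → ℝ} (ht : Tendsto t atTop (𝓝 0))
    (hDt : ∀ k x, ‖D k x‖ * r ^ k ≤ t k * ‖x‖) (n : ℕ) (x : K) :
    ‖D n x‖ * r ^ n ≤ ‖x‖ := by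
  set M : K → ℝ := fun z => gaussNorm (‖·‖) r (taylorSeries D z)
  have hcoeff : ∀ k z, coeff k (taylorSeries D z) = D k z := fun k z => coeff_mk _ _
  have htend : ∀ z, Tendsto (fun k => ‖coeff k (taylorSeries D z)‖ * r ^ k) atTop (𝓝 0) :=
    fun z => squeeze_zero (fun k => by positivity) (fun k => by simpa [hcoeff] using hDt k z)
      (by simpa using ht.mul_const ‖z‖)
  have hle : ∀ k z, ‖D k z‖ * r ^ k ≤ M z := fun k z => by
    simpa [hcoeff] using le_gaussNorm (‖·‖) r _ (htend z).bddAbove_range k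
  obtain ⟨C, hC⟩ := ht.bddAbove_range
  have hMC : ∀ z, M z ≤ C * ‖z‖ := fun z => by
    simp only [M, gaussNorm_eq, hcoeff]
    exact ciSup_le fun k =>
      (hDt k z).trans (mul_le_mul_of_nonneg_right (hC ⟨k, rfl⟩) (norm_nonneg z))
  have hpow : ∀ m : ℕ, M x ^ (m + 1) ≤ M (x ^ (m + 1)) := by
    intro m
    induction m with
    | zero => simp
    | succ m ih =>
      calc M x ^ (m + 2) = M x ^ (m + 1) * M x := pow_succ _ _
        _ ≤ M (x ^ (m + 1)) * M x :=
          mul_le_mul_of_nonneg_right ih (gaussNorm_nonneg _ _ _ norm_nonneg)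
        _ ≤ M (x ^ (m + 2)) := by
          simp only [M, pow_succ x (m + 1), taylorSeries_mul hD]
          refine gaussNorm_le_mul_of_tendsto hr (htend _) (htend _) ?_
          rw [← taylorSeries_mul hD]
          exact (htend _).bddAbove_range
  have hMx : M x ≤ ‖x‖ := le_of_forall_pow_succ_le_mul_pow (norm_nonneg x) fun m =>
    (hpow m).trans ((hMC _).trans_eq (by rw [norm_pow]))
  exact (hle n x).trans hMx

section Leibniz

variable {R : Type*} [Semiring R] {d : R → R} (hadd : ∀ a b, d (a + b) = d a + d b)
  (hmul : ∀ a b, d (a * b) = d a * b + a * d b)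
include hadd hmul

theorem iterate_mul_eq_sum_choose (k : ℕ) (x y : R) :
    d^[k] (x * y) = ∑ p ∈ antidiagonal k, (k.choose p.1 : R) * (d^[p.1] x * d^[p.2] y) := by
  have hiter : ∀ k a b, d^[k] (a + b) = d^[k] a + d^[k] b :=
    iterate_map_add (⟨d, hadd⟩ : AddHom R R)
  induction k generalizing x y with
  | zero => simp
  | succ k ih =>
    rw [Function.iterate_succ_apply, hmul, hiter, ih, ih, add_comm,
      sum_antidiagonal_choose_succ_mul (fun i j => d^[i] x * d^[j] y)]
    congr 1
    refine sum_congr rfl fun p hp => ?_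
    rw [Nat.choose_symm_of_eq_add (HasAntidiagonal.mem_antidiagonal.mp hp).symm,
      ← Function.iterate_succ_apply]

end Leibniz

section DividedIterate

variable {K : Type*} [Field K] {d : K → K}

def dividedIterate (d : K → K) (k : ℕ) (x : K) : K :=
  (k ! : K)⁻¹ * d^[k] x

@[simp]
lemma dividedIterate_one (d : K → K) : dividedIterate d 1 = d := by
  ext x
  simp [dividedIterate]

theorem dividedIterate_mul [CharZero K] (hadd : ∀ a b, d (a + b) = d a + d b)
    (hmul : ∀ a b, d (a * b) = d a * b + a * d b) (k : ℕ) (x y : K) :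
    dividedIterate d k (x * y)
      = ∑ p ∈ antidiagonal k, dividedIterate d p.1 x * dividedIterate d p.2 y := by
  rw [dividedIterate, iterate_mul_eq_sum_choose hadd hmul, mul_sum]
  refine sum_congr rfl fun p hp => ?_
  rw [← HasAntidiagonal.mem_antidiagonal.mp hp, Nat.cast_add_choose, dividedIterate,
    dividedIterate]
  have := (p.1 + p.2).factorial_ne_zero
  field_simp

end DividedIterate

section OpNorm

variable {K : Type*} [NormedField K] {f : K → K} {c : ℝ}

lemma opNorm_nonneg (f : K → K) : 0 ≤ opNorm f :=
  Real.iSup_nonneg fun _ => by positivity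

lemma opNorm_le (hf : ∀ x, ‖f x‖ ≤ c * ‖x‖) : opNorm f ≤ c :=
  have : Nonempty {x : K // x ≠ 0} := ⟨⟨1, one_ne_zero⟩⟩
  ciSup_le fun x => (div_le_iff₀ (norm_pos_iff.mpr x.2)).mpr (hf x)

lemma norm_apply_le_opNorm_mul (hf : ∀ x, ‖f x‖ ≤ c * ‖x‖) (x : K) :
    ‖f x‖ ≤ opNorm f * ‖x‖ := by
  rcases eq_or_ne x 0 with rfl | hx
  · simpa using hf 0
  have hbdd : BddAbove (Set.range fun x : {x : K // x ≠ 0} => ‖f x.1‖ / ‖x.1‖) :=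
    ⟨c, by rintro _ ⟨x, rfl⟩; exact (div_le_iff₀ (norm_pos_iff.mpr x.2)).mpr (hf x)⟩
  exact (div_le_iff₀ (norm_pos_iff.mpr hx)).mp (le_ciSup hbdd ⟨x, hx⟩)

end OpNorm

section SpectralNorm

variable {K : Type*} [NormedField K] {d : K → K} {c : ℝ} (hd : ∀ x, ‖d x‖ ≤ c * ‖x‖)
include hd

lemma norm_iterate_le_pow_mul (k : ℕ) (x : K) : ‖d^[k] x‖ ≤ c ^ k * ‖x‖ := by
  have hc : 0 ≤ c := by simpa using (norm_nonneg _).trans (hd 1)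
  induction k generalizing x with
  | zero => simp
  | succ k ih =>
    rw [Function.iterate_succ_apply, pow_succ, mul_assoc]
    exact (ih _).trans (mul_le_mul_of_nonneg_left (hd x) (pow_nonneg hc k))

lemma isBoundedUnder_opNorm_iterate_rpow :
    IsBoundedUnder (· ≤ ·) atTop fun n : ℕ => opNorm (d^[n]) ^ ((n : ℝ)⁻¹) := by
  refine isBoundedUnder_of_eventually_le (a := c) ?_
  filter_upwards [eventually_ne_atTop 0] with n hn
  calc opNorm (d^[n]) ^ ((n : ℝ)⁻¹) ≤ (c ^ n) ^ ((n : ℝ)⁻¹) :=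
        Real.rpow_le_rpow (opNorm_nonneg _) (opNorm_le (norm_iterate_le_pow_mul hd n))
          (by positivity)
    _ = c := Real.pow_rpow_inv_natCast (by simpa using (norm_nonneg _).trans (hd 1)) hn

lemma spectralNorm'_nonneg : 0 ≤ spectralNorm' d :=
  le_limsup_of_frequently_le (Frequently.of_forall fun _ => Real.rpow_nonneg (opNorm_nonneg _) _)
    (isBoundedUnder_opNorm_iterate_rpow hd)

lemma eventually_opNorm_iterate_le_pow {u : ℝ} (hu : spectralNorm' d < u) :
    ∀ᶠ k in atTop, opNorm (d^[k]) ≤ u ^ k := by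
  filter_upwards [eventually_lt_of_limsup_lt hu (isBoundedUnder_opNorm_iterate_rpow hd),
    eventually_ne_atTop 0] with k hk hk0
  calc opNorm (d^[k]) = (opNorm (d^[k]) ^ ((k : ℝ)⁻¹)) ^ k :=
        (Real.rpow_inv_natCast_pow (opNorm_nonneg _) hk0).symm
    _ ≤ u ^ k := pow_le_pow_left₀ (Real.rpow_nonneg (opNorm_nonneg _) _) hk.le k

end SpectralNorm

section ResidueChar

variable {K : Type*} [NormedField K] {p : ℕ} [Fact p.Prime] (hp : ‖(p : K)‖ = (p : ℝ)⁻¹)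
  (hq : ∀ q : ℕ, q.Prime → q ≠ p → ‖(q : K)‖ = 1)
include hp hq

lemma norm_natCast_eq_inv_pow_padicValNat {m : ℕ} (hm : m ≠ 0) :
    ‖(m : K)‖ = (p : ℝ)⁻¹ ^ padicValNat p m := by
  induction m using Nat.recOnMul with
  | zero => exact absurd rfl hm
  | one => simp
  | prime q hqp =>
    rcases eq_or_ne q p with rfl | hne
    · simp [hp]
    · have : Fact q.Prime := ⟨hqp⟩
      rw [hq q hqp hne, padicValNat_primes hne.symm, pow_zero]
  | mul a b iha ihb =>
    have ha : a ≠ 0 := left_ne_zero_of_mul hm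
    have hb : b ≠ 0 := right_ne_zero_of_mul hm
    rw [Nat.cast_mul, norm_mul, iha ha, ihb hb, padicValNat.mul ha hb, pow_add]

lemma pow_le_norm_factorial {ω : ℝ} (hω₀ : 0 ≤ ω) (hω₁ : ω ≤ 1) (hωp : ω ^ (p - 1) = (p : ℝ)⁻¹)
    (i : ℕ) : ω ^ i ≤ ‖(i ! : K)‖ := by
  rw [norm_natCast_eq_inv_pow_padicValNat hp hq (factorial_ne_zero i), ← hωp, ← pow_mul]
  exact pow_le_pow_of_le_one hω₀ hω₁
    ((sub_one_mul_padicValNat_factorial i).trans_le (Nat.sub_le _ _))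

end ResidueChar

lemma rpow_neg_one_div_sub_one_pow {p : ℕ} (hp : 1 < p) :
    ((p : ℝ) ^ (-(1 : ℝ) / ((p : ℝ) - 1))) ^ (p - 1) = (p : ℝ)⁻¹ := by
  have hp' : (1 : ℝ) < p := by exact_mod_cast hp
  rw [← Real.rpow_natCast, ← Real.rpow_mul (by positivity), Nat.cast_sub hp.le, Nat.cast_one,
    div_mul_cancel₀ _ (by linarith), Real.rpow_neg_one]

section Derivation

variable {K : Type*} [NormedField K] {d : K → K} {c : ℝ} (hd : ∀ x, ‖d x‖ ≤ c * ‖x‖)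
  {ω : ℝ} (hω : 0 < ω) (hfact : ∀ i, ω ^ i ≤ ‖(i ! : K)‖)
include hd hω hfact

lemma norm_dividedIterate_le (k : ℕ) (x : K) :
    ‖dividedIterate d k x‖ ≤ (ω ^ k)⁻¹ * opNorm (d^[k]) * ‖x‖ := by
  rw [dividedIterate, norm_mul, norm_inv, mul_assoc]
  exact mul_le_mul (inv_anti₀ (pow_pos hω k) (hfact k))
    (norm_apply_le_opNorm_mul (norm_iterate_le_pow_mul hd k) x) (by positivity) (by positivity)

variable [IsUltrametricDist K] [CharZero K] (hadd : ∀ a b, d (a + b) = d a + d b)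
  (hmul : ∀ a b, d (a * b) = d a * b + a * d b)
include hadd hmul

theorem norm_dividedIterate_le_pow_mul {q : ℝ} (hq : spectralNorm' d < ω * q) (n : ℕ) (x : K) :
    ‖dividedIterate d n x‖ ≤ q ^ n * ‖x‖ := by
  have hq₀ : 0 < q := pos_of_mul_pos_right ((spectralNorm'_nonneg hd).trans_lt hq) hω.le
  obtain ⟨u, hsu, huq⟩ := exists_between hq
  have hu : 0 ≤ u := (spectralNorm'_nonneg hd).trans hsu.le
  have hρ : u / (ω * q) < 1 := (div_lt_one (by positivity)).mpr huq
  have ht : Tendsto (fun k => (ω ^ k)⁻¹ * opNorm (d^[k]) * q⁻¹ ^ k) atTop (𝓝 0) := by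
    refine squeeze_zero' (Eventually.of_forall fun k => ?_) ?_
      (tendsto_pow_atTop_nhds_zero_of_lt_one (by positivity) hρ)
    · have := opNorm_nonneg (d^[k]); positivity
    filter_upwards [eventually_opNorm_iterate_le_pow hd hsu] with k hk
    calc _ ≤ (ω ^ k)⁻¹ * u ^ k * q⁻¹ ^ k := by gcongr
      _ = (u / (ω * q)) ^ k := by rw [div_eq_mul_inv, mul_inv, ← inv_pow]; ring
  have key := norm_mul_pow_le_of_tendsto (dividedIterate_mul hadd hmul) (inv_pos.mpr hq₀) ht
    (fun k x => (mul_le_mul_of_nonneg_right (norm_dividedIterate_le hd hω hfact k x)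
      (by positivity)).trans_eq (by ring)) n x
  rwa [inv_pow, ← div_eq_mul_inv, div_le_iff₀ (by positivity), mul_comm] at key

theorem opNorm_dividedIterate_le (n : ℕ) :
    opNorm (dividedIterate d n) ≤ (ω⁻¹ * spectralNorm' d) ^ n := by
  refine opNorm_le fun x => ?_
  have hlim : Tendsto (fun q : ℝ => q ^ n * ‖x‖) (𝓝[>] (ω⁻¹ * spectralNorm' d))
      (𝓝 ((ω⁻¹ * spectralNorm' d) ^ n * ‖x‖)) :=
    ((continuous_pow n).mul continuous_const).continuousAt.tendsto.mono_left nhdsWithin_le_nhds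
  exact ge_of_tendsto hlim (eventually_nhdsWithin_of_forall fun q hq =>
    norm_dividedIterate_le_pow_mul hd hω hfact hadd hmul ((inv_mul_lt_iff₀ hω).mp hq) n x)

end Derivation

theorem factorial_deriv_opNorm_le_general
    (K : Type*) [NormedField K] [IsUltrametricDist K] [CharZero K]
    (p : ℕ) (hp : p = 0 ∨ p.Prime)
    (hres0 : p = 0 → ∀ m : ℕ, m ≠ 0 → ‖(m : K)‖ = 1)
    (hresp : p ≠ 0 → ‖(p : K)‖ = (p : ℝ)⁻¹)
    (hresq : p ≠ 0 → ∀ q : ℕ, q.Prime → q ≠ p → ‖(q : K)‖ = 1)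
    (d : K → K) (hadd : ∀ a b : K, d (a + b) = d a + d b)
    (hmul : ∀ a b : K, d (a * b) = d a * b + a * d b)
    (hbdd : ∃ c : ℝ, ∀ x : K, ‖d x‖ ≤ c * ‖x‖)
    (ω : ℝ) (hω : ω = if p = 0 then 1 else (p : ℝ) ^ (-(1 : ℝ) / ((p : ℝ) - 1))) :
    (∀ n : ℕ, 1 ≤ n →
        opNorm (fun x => ((n.factorial : K))⁻¹ * d^[n] x) ≤ ω⁻¹ ^ n * (spectralNorm' d) ^ n) ∧
    ω * opNorm d ≤ spectralNorm' d := by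
  obtain ⟨c, hd⟩ := hbdd
  obtain ⟨hω₀, hfact⟩ : 0 < ω ∧ ∀ i, ω ^ i ≤ ‖(i ! : K)‖ := by
    rcases hp with rfl | hp
    · simp [hω, hres0 rfl _ (factorial_ne_zero _)]
    have : Fact p.Prime := ⟨hp⟩
    have hp₁ : (1 : ℝ) < p := by exact_mod_cast hp.one_lt
    rw [hω, if_neg hp.ne_zero]
    refine ⟨by positivity, pow_le_norm_factorial (hresp hp.ne_zero) (hresq hp.ne_zero)
      (by positivity) (Real.rpow_le_one_of_one_le_of_nonpos hp₁.le ?_)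
      (rpow_neg_one_div_sub_one_pow hp.one_lt)⟩
    exact div_nonpos_of_nonpos_of_nonneg (by norm_num) (by linarith)
  have key := opNorm_dividedIterate_le hd hω₀ hfact hadd hmul
  refine ⟨fun n _ => (key n).trans_eq (mul_pow _ _ _), ?_⟩
  have h₁ : opNorm d ≤ ω⁻¹ * spectralNorm' d := by simpa using key 1
  exact (le_inv_mul_iff₀ hω₀).mp h₁

/-- Corollary (`C:bound using spectral norm`): for a complete nonarchimedean field
`K` of characteristic zero and residue characteristic `p` (norm normalized so that
`|p| = 1/p` when `p > 0`), equipped with a bounded derivation `∂`, one has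
`|∂ⁿ/n!|_K ≤ ω^{−n} |∂|_{sp,K}ⁿ` for all `n ≥ 1`, where `ω = p^{−1/(p−1)}` if
`p > 0` and `ω = 1` if `p = 0`; in particular `|∂|_{sp,K} ≥ ω |∂|_K`. -/
theorem factorial_deriv_opNorm_le
    (K : Type*) [NormedField K] [CompleteSpace K] [IsUltrametricDist K] [CharZero K]
    (p : ℕ) (hp : p = 0 ∨ p.Prime)
    (hres0 : p = 0 → ∀ m : ℕ, m ≠ 0 → ‖(m : K)‖ = 1)
    (hresp : p ≠ 0 → ‖(p : K)‖ = (p : ℝ)⁻¹)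
    (hresq : p ≠ 0 → ∀ q : ℕ, q.Prime → q ≠ p → ‖(q : K)‖ = 1)
    (d : K → K) (hadd : ∀ a b : K, d (a + b) = d a + d b)
    (hmul : ∀ a b : K, d (a * b) = d a * b + a * d b)
    (hbdd : ∃ c : ℝ, ∀ x : K, ‖d x‖ ≤ c * ‖x‖)
    (ω : ℝ) (hω : ω = if p = 0 then 1 else (p : ℝ) ^ (-(1 : ℝ) / ((p : ℝ) - 1))) :
    (∀ n : ℕ, 1 ≤ n →
        opNorm (fun x => ((n.factorial : K))⁻¹ * d^[n] x) ≤ ω⁻¹ ^ n * (spectralNorm' d) ^ n) ∧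
    ω * opNorm d ≤ spectralNorm' d :=
  factorial_deriv_opNorm_le_general K p hp hres0 hresp hresq d hadd hmul hbdd ω hω
end

section
/- Let C be a transrational polyhedral (TRP) subset of ℝⁿ, i.e., an intersection of finitely many half-spaces {x : a·x + b ≥ 0} with a ∈ ℤⁿ and b ∈ ℝ. Let f : C → ℝ be a function that is convex transintegral polyhedral in dimension 1: for every x ∈ C and a ∈ ℚⁿ, the function t ↦ f(x + ta) on the interval I_{x,a} = {t ∈ ℝ : x + ta ∈ C} is continuous, convex, piecewise affine with slopes in a₁ℤ + ⋯ + aₙℤ, and has only finitely many slopes. Then f itself is convex on C; that is, t·f(x) + (1−t)·f(y) ≥ f(tx + (1−t)y) for all x, y ∈ C and t ∈ [0,1]. -/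
/-!
Along a rational line the hypothesis is convexity itself, so the inequality holds for `x, y ∈ C`
whenever `y - x` is a multiple of a rational vector. In general write `y - x = ∑ λₗ qₗ` with
rational `qₗ` and induct on the number of terms. As `C` is cut out by rational half-spaces,
rational points are dense in its cone of feasible directions at `y`, which contains `x - y`; so
some rational `w = ∑ βₗ qₗ` with `β ≈ -λ` is feasible at `y`. If `β ∥ λ`, then `y - x` is a
multiple of `w`. Otherwise, for arbitrarily small `s > 0` two coordinates of `λ + s β` are in
rational ratio, so `y + s w - x` needs one term fewer, and the inequality for `x, y + s w` passes
to the limit `s → 0` by continuity of `f` along the lines through `y` and `a x + b y` in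
direction `w`.
-/

open Finset Filter Topology Set Matrix

noncomputable def ratVec {ι : Type*} (q : ι → ℚ) : ι → ℝ := fun i => (q i : ℝ)

@[simp] lemma ratVec_apply {ι : Type*} (q : ι → ℚ) (i : ι) : ratVec q i = q i := rfl

lemma ratVec_sum_smul {ι κ : Type*} [Fintype κ] (β : κ → ℚ) (q : κ → ι → ℚ) :
    ratVec (∑ l, β l • q l) = ∑ l, (β l : ℝ) • ratVec (q l) := by
  ext; simp

lemma denseRange_ratVec {ι : Type*} : DenseRange (ratVec : (ι → ℚ) → ι → ℝ) :=
  DenseRange.piMap fun _ => Rat.denseRange_cast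

lemma ratVec_mulVec {ι κ : Type*} [Fintype κ] (M : Matrix ι κ ℚ) (v : κ → ℚ) :
    ratVec (M *ᵥ v) = M.map (↑) *ᵥ ratVec v :=
  funext fun i => (Rat.castHom ℝ).map_mulVec M v i

lemma Matrix.exists_mul_mul_eq_self {K ι κ : Type*} [Field K] [Fintype ι] [Fintype κ]
    (M : Matrix ι κ K) : ∃ L : Matrix κ ι K, M * L * M = M := by
  classical
  set F := Matrix.toLin' M
  obtain ⟨R, hR⟩ := F.rangeRestrict.exists_rightInverse_of_surjective F.range_rangeRestrict
  obtain ⟨L, hL⟩ := LinearMap.exists_extend R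
  refine ⟨LinearMap.toMatrix' L, Matrix.toLin'.injective <| LinearMap.ext fun v => ?_⟩
  have h := congrArg Subtype.val (LinearMap.congr_fun hR ⟨F v, LinearMap.mem_range_self F v⟩)
  have hLv : L (F v) = R ⟨F v, LinearMap.mem_range_self F v⟩ :=
    LinearMap.congr_fun hL ⟨F v, LinearMap.mem_range_self F v⟩
  simp only [Matrix.toLin'_mul, Matrix.toLin'_toMatrix', LinearMap.comp_apply]
  rw [hLv]
  exact h

lemma mem_closure_ratVec_image_of_mulVec_eq_zero {ι κ : Type*} [Fintype ι] [Fintype κ]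
    (M : Matrix ι κ ℚ) {μ : κ → ℝ}
    (hμ : M.map (↑) *ᵥ μ = 0) : μ ∈ closure (ratVec '' {β | M *ᵥ β = 0}) := by
  obtain ⟨L, hL⟩ := M.exists_mul_mul_eq_self
  -- `ν ↦ ν - L M ν` is a continuous retraction onto `ker M` that preserves rational points
  set F : (κ → ℝ) → κ → ℝ := fun ν => ν - L.map (↑) *ᵥ (M.map (↑) *ᵥ ν)
  have hF : Continuous F := by fun_prop
  have hFμ : F μ = μ := by simp only [F, hμ, mulVec_zero, sub_zero]
  refine hFμ ▸ map_mem_closure hF (denseRange_ratVec μ) ?_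
  rintro _ ⟨σ, rfl⟩
  refine ⟨σ - L *ᵥ (M *ᵥ σ), ?_, ?_⟩
  · simp [mulVec_sub, mulVec_mulVec, ← Matrix.mul_assoc, hL]
  · simp only [F, ← ratVec_mulVec]
    ext
    simp

lemma mem_closure_ratVec_image_of_mulVec_nonneg {ι κ : Type*} [Fintype ι] [Fintype κ]
    (M : Matrix ι κ ℚ) {μ : κ → ℝ}
    (hμ : 0 ≤ M.map (↑) *ᵥ μ) : μ ∈ closure (ratVec '' {β | 0 ≤ M *ᵥ β}) := by
  set tight : Set ι := {i | (M.map (↑) *ᵥ μ) i = 0}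
  -- near `μ` the slack rows stay positive, so only the tight ones have to be kept exactly
  have hslack : ∀ᶠ ν in 𝓝 μ, ∀ i ∉ tight, 0 < (M.map (↑) *ᵥ ν) i := by
    refine eventually_all.2 fun i => ?_
    by_cases hi : i ∈ tight
    · exact .of_forall fun _ h => absurd hi h
    · have hcont : Continuous fun ν : κ → ℝ => (M.map (↑) *ᵥ ν) i := by fun_prop
      have hpos : 0 < (M.map (↑) *ᵥ μ) i := lt_of_le_of_ne (hμ i) (Ne.symm hi)
      exact (continuousAt_const.eventually_lt hcont.continuousAt hpos).mono fun _ h _ => h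
  have hker := mem_closure_ratVec_image_of_mulVec_eq_zero (M.submatrix ((↑) : tight → ι) id)
    (μ := μ) (funext fun i => i.2)
  rw [mem_closure_iff_frequently] at hker ⊢
  refine (hker.and_eventually hslack).mono ?_
  rintro _ ⟨⟨β, hβ, rfl⟩, hpos⟩
  refine ⟨β, fun i => ?_, rfl⟩
  by_cases hi : i ∈ tight
  · exact (congrFun hβ ⟨i, hi⟩).ge
  · have := hpos i hi
    rw [← ratVec_mulVec] at this
    simpa using this.le

def transrationalPolyhedron {ι κ : Type*} [Fintype κ] (A : Matrix ι κ ℚ) (c : ι → ℝ) :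
    Set (κ → ℝ) :=
  {x | ∀ i, 0 ≤ (A.map (↑) *ᵥ x) i + c i}

section Polyhedron

variable {ι κ : Type*} [Fintype κ] {A : Matrix ι κ ℚ} {c : ι → ℝ}

lemma convex_transrationalPolyhedron (A : Matrix ι κ ℚ) (c : ι → ℝ) :
    Convex ℝ (transrationalPolyhedron A c) := by
  intro x hx y hy a b ha hb hab i
  have h : (A.map (↑) *ᵥ (a • x + b • y)) i + c i
      = a * ((A.map (↑) *ᵥ x) i + c i) + b * ((A.map (↑) *ᵥ y) i + c i) := by
    simp only [mulVec_add, mulVec_smul, Pi.add_apply, Pi.smul_apply, smul_eq_mul]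
    linear_combination (-c i) * hab
  rw [h]
  exact add_nonneg (mul_nonneg ha (hx i)) (mul_nonneg hb (hy i))

lemma eventually_add_smul_mem_transrationalPolyhedron [Finite ι] {y v : κ → ℝ}
    (hy : y ∈ transrationalPolyhedron A c)
    (hv : ∀ i, (A.map (↑) *ᵥ y) i + c i = 0 → 0 ≤ (A.map (↑) *ᵥ v) i) :
    ∀ᶠ s in 𝓝[≥] (0 : ℝ), y + s • v ∈ transrationalPolyhedron A c := by
  refine eventually_all.2 fun i => ?_
  have h : ∀ s : ℝ, (A.map (↑) *ᵥ (y + s • v)) i + c i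
      = (A.map (↑) *ᵥ y) i + c i + s * (A.map (↑) *ᵥ v) i := fun s => by
    simp only [mulVec_add, mulVec_smul, Pi.add_apply, Pi.smul_apply, smul_eq_mul]
    ring
  simp only [h]
  rcases (hy i).eq_or_lt with htight | hslack
  · filter_upwards [self_mem_nhdsWithin] with s (hs : 0 ≤ s)
    rw [← htight, zero_add]
    exact mul_nonneg hs (hv i htight.symm)
  · have hcont : Continuous fun s : ℝ => (A.map (↑) *ᵥ y) i + c i + s * (A.map (↑) *ᵥ v) i := by
      fun_prop
    refine nhdsWithin_le_nhds ((continuousAt_const.eventually_lt hcont.continuousAt ?_).mono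
      fun _ h => h.le)
    simpa using hslack

lemma mem_closure_ratVec_image_of_add_sum_mem {σ : Type*} [Fintype ι] [Fintype σ] {y : κ → ℝ}
    (hy : y ∈ transrationalPolyhedron A c)
    (q : σ → κ → ℚ) {μ : σ → ℝ}
    (hμ : y + ∑ l, μ l • ratVec (q l) ∈ transrationalPolyhedron A c) :
    μ ∈ closure (ratVec '' {β | ∀ᶠ s in 𝓝[≥] (0 : ℝ),
      y + s • ratVec (∑ l, β l • q l) ∈ transrationalPolyhedron A c}) := by
  set tight := {i // (A.map (↑) *ᵥ y) i + c i = 0}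
  set M : Matrix tight σ ℚ := Matrix.of fun i l => (A *ᵥ q l) i.1
  have hM : ∀ (ν : σ → ℝ) (i : tight),
      (M.map (↑) *ᵥ ν) i = (A.map (↑) *ᵥ ∑ l, ν l • ratVec (q l)) i.1 := by
    intro ν i
    simp only [M, Matrix.mulVec, dotProduct, map_apply, of_apply, Finset.sum_apply,
      Pi.smul_apply, smul_eq_mul, ratVec_apply, Finset.mul_sum, Finset.sum_mul, Rat.cast_sum,
      Rat.cast_mul]
    rw [Finset.sum_comm]
    exact Finset.sum_congr rfl fun _ _ => Finset.sum_congr rfl fun _ _ => by ring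
  refine closure_mono ?_ (mem_closure_ratVec_image_of_mulVec_nonneg M fun i => ?_)
  · rintro _ ⟨β, hβ, rfl⟩
    refine ⟨β, eventually_add_smul_mem_transrationalPolyhedron hy fun i hi => ?_, rfl⟩
    have := hM (ratVec β) ⟨i, hi⟩
    simp only [← ratVec_mulVec, ratVec_apply] at this
    rw [ratVec_sum_smul, ← this]
    exact_mod_cast hβ ⟨i, hi⟩
  · have := hμ i.1
    rw [Pi.zero_apply, hM]
    simp only [mulVec_add, Pi.add_apply] at this
    linarith [i.2]

def ConvexOnRatLines {κ : Type*} (C : Set (κ → ℝ)) (f : (κ → ℝ) → ℝ) : Prop :=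
  ∀ x ∈ C, ∀ q : κ → ℚ,
    ContinuousOn (fun t : ℝ => f (x + t • ratVec q)) {t : ℝ | x + t • ratVec q ∈ C} ∧
    ConvexOn ℝ {t : ℝ | x + t • ratVec q ∈ C} (fun t => f (x + t • ratVec q))

namespace ConvexOnRatLines

variable {κ : Type*} {C : Set (κ → ℝ)} {f : (κ → ℝ) → ℝ} {x y : κ → ℝ} {a b : ℝ}

lemma le_of_eq_add_smul (hf : ConvexOnRatLines C f) (hx : x ∈ C) {τ : ℝ} {q : κ → ℚ}
    (hy : x + τ • ratVec q ∈ C) (ha : 0 ≤ a) (hb : 0 ≤ b) (hab : a + b = 1) :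
    f (a • x + b • (x + τ • ratVec q)) ≤ a * f x + b * f (x + τ • ratVec q) := by
  have h := (hf x hx q).2.2 (x := 0) (y := τ) (by simpa using hx) hy ha hb hab
  have hcombo : a • x + b • (x + τ • ratVec q) = x + (a • (0 : ℝ) + b • τ) • ratVec q := by
    rw [smul_add, ← add_assoc, Convex.combo_self hab, smul_zero, zero_add, smul_smul,
      smul_eq_mul]
  rw [hcombo]
  simpa using h

lemma le_of_mem_closure (hf : ConvexOnRatLines C f) (hC : Convex ℝ C) (hx : x ∈ C) (hy : y ∈ C)
    {q : κ → ℚ} (ha : 0 ≤ a) (hb : 0 ≤ b) (hab : a + b = 1)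
    (h0 : (0 : ℝ) ∈ closure {s | y + s • ratVec q ∈ C ∧
      f (a • x + b • (y + s • ratVec q)) ≤ a * f x + b * f (y + s • ratVec q)}) :
    f (a • x + b • y) ≤ a * f x + b * f y := by
  set z := a • x + b • y
  have hz : z ∈ C := hC hx hy ha hb hab
  have hshift : ∀ s : ℝ, a • x + b • (y + s • ratVec q) = z + (b * s) • ratVec q := fun s => by
    rw [smul_add, smul_smul, add_assoc]
  simp only [hshift] at h0
  set S := {s : ℝ | y + s • ratVec q ∈ C ∧
    f (z + (b * s) • ratVec q) ≤ a * f x + b * f (y + s • ratVec q)}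
  have hzcont : ContinuousWithinAt (fun s => f (z + (b * s) • ratVec q)) S 0 :=
    ((hf z hz q).1 0 (by simpa using hz)).comp_of_eq (continuous_const_mul b).continuousWithinAt
      (fun s hs => by simpa [← hshift] using hC hx hs.1 ha hb hab) (mul_zero b)
  have hycont : ContinuousWithinAt (fun s => a * f x + b * f (y + s • ratVec q)) S 0 :=
    continuousWithinAt_const.add (continuousWithinAt_const.mul
      (((hf y hy q).1 0 (by simpa using hy)).mono fun s hs => hs.1))
  simpa using hzcont.closure_le h0 hycont fun s hs => hs.2

end ConvexOnRatLines

lemma frequently_exists_rat_eq_mul {u₀ u₁ v₀ v₁ : ℝ} (hu : u₁ ≠ 0) (h : u₀ * v₁ ≠ u₁ * v₀) :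
    ∃ᶠ s in 𝓝[>] (0 : ℝ), ∃ ρ : ℚ, u₀ + s * v₀ = ρ * (u₁ + s * v₁) := by
  rw [(nhdsGT_basis (0 : ℝ)).frequently_iff]
  intro δ hδ
  obtain ⟨ε, hε, hden⟩ := Metric.eventually_nhds_iff.1 <|
    ((continuous_const.add (continuous_id.mul continuous_const)).continuousAt (x := (0 : ℝ))
      |>.eventually_ne (by simpa using hu) : ∀ᶠ s in 𝓝 (0 : ℝ), u₁ + s * v₁ ≠ 0)
  set δ' := min (δ / 2) (ε / 2)
  have hδ' : 0 < δ' := lt_min (half_pos hδ) (half_pos hε)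
  have hden' : ∀ s ∈ Icc 0 δ', u₁ + s * v₁ ≠ 0 := fun s hs => hden <| by
    rw [Real.dist_eq, sub_zero, abs_of_nonneg hs.1]
    exact hs.2.trans_lt ((min_le_right _ _).trans_lt (half_lt_self hε))
  set φ := fun s : ℝ => (u₀ + s * v₀) / (u₁ + s * v₁)
  have hφ : ContinuousOn φ (uIcc 0 δ') := by
    rw [uIcc_of_le hδ'.le]
    exact ContinuousOn.div (by fun_prop) (by fun_prop) hden'
  have hφne : φ 0 ≠ φ δ' := by
    intro heq
    simp only [φ, zero_mul, add_zero] at heq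
    rw [div_eq_div_iff hu (hden' δ' ⟨hδ'.le, le_rfl⟩)] at heq
    exact h (mul_left_cancel₀ hδ'.ne' (by linear_combination heq))
  obtain ⟨ρ, hρmin, hρmax⟩ := exists_rat_btwn (min_lt_max.2 hφne)
  obtain ⟨s, hs, hφs⟩ := intermediate_value_uIcc hφ ⟨hρmin.le, hρmax.le⟩
  rw [uIcc_of_le hδ'.le] at hs
  have hs0 : s ≠ 0 := by
    rintro rfl
    rcases le_total (φ 0) (φ δ') with hle | hle
    · rw [min_eq_left hle] at hρmin
      exact hρmin.ne hφs
    · rw [max_eq_left hle] at hρmax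
      exact hρmax.ne hφs.symm
  refine ⟨s, ⟨lt_of_le_of_ne hs.1 (Ne.symm hs0), hs.2.trans_lt ?_⟩, ρ, ?_⟩
  · exact (min_le_left _ _).trans_lt (half_lt_self hδ)
  · rw [← hφs, div_mul_cancel₀ _ (hden' s hs)]

lemma exists_eq_smul_of_mul_eq_mul {σ : Type*} {u v : σ → ℝ} (hv : v ≠ 0)
    (h : ∀ i j, u i * v j = u j * v i) : ∃ τ : ℝ, u = τ • v := by
  obtain ⟨j, hj⟩ := Function.ne_iff.1 hv
  refine ⟨u j / v j, funext fun i => ?_⟩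
  rw [Pi.smul_apply, smul_eq_mul, div_mul_eq_mul_div, eq_div_iff hj, h i j]

lemma exists_sum_smul_ratVec_eq_of_eq_mul {κ : Type*} {k : ℕ} (μ : Fin (k + 1) → ℝ)
    (q : Fin (k + 1) → κ → ℚ) {i j : Fin (k + 1)} (hij : i ≠ j) {ρ : ℚ} (h : μ i = ρ * μ j) :
    ∃ q' : Fin k → κ → ℚ, ∑ l, μ l • ratVec (q l) = ∑ l, μ (i.succAbove l) • ratVec (q' l) := by
  obtain ⟨j, rfl⟩ := Fin.exists_succAbove_eq hij.symm
  refine ⟨fun l => q (i.succAbove l) + if l = j then ρ • q i else 0, ?_⟩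
  ext x
  simp only [Fin.sum_univ_succAbove _ i, Finset.sum_apply, Pi.smul_apply, ratVec_apply,
    Pi.add_apply, smul_eq_mul, h, ite_apply, Pi.zero_apply, Rat.cast_add,
    apply_ite (Rat.cast : ℚ → ℝ), Rat.cast_mul, Rat.cast_zero, mul_add, mul_ite, mul_zero,
    sum_add_distrib, sum_ite_eq', Finset.mem_univ, ↓reduceIte]
  ring

lemma frequently_exists_sum_smul_ratVec_eq {κ : Type*} {k : ℕ} {lam β : Fin (k + 1) → ℝ}
    (q : Fin (k + 1) → κ → ℚ) (h : ∃ i j, lam i * β j ≠ lam j * β i) :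
    ∃ᶠ s in 𝓝[>] (0 : ℝ), ∃ (μ : Fin k → ℝ) (q' : Fin k → κ → ℚ),
      ∑ l, (lam + s • β) l • ratVec (q l) = ∑ l, μ l • ratVec (q' l) := by
  obtain ⟨i, j, hj, hij⟩ : ∃ i j, lam j ≠ 0 ∧ lam i * β j ≠ lam j * β i := by
    obtain ⟨i, j, h⟩ := h
    by_cases hj : lam j = 0
    · exact ⟨j, i, fun hi => h (by simp [hi, hj]), h.symm⟩
    · exact ⟨i, j, hj, h⟩
  have hne : i ≠ j := by
    rintro rfl
    exact hij rfl
  refine (frequently_exists_rat_eq_mul hj hij).mono fun s ⟨ρ, hρ⟩ => ?_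
  exact ⟨_, exists_sum_smul_ratVec_eq_of_eq_mul _ q hne (ρ := ρ) (by simpa using hρ)⟩

section

variable {ι κ : Type*} [Fintype ι] [Fintype κ] {A : Matrix ι κ ℚ} {c : ι → ℝ}
  {f : (κ → ℝ) → ℝ} {a b : ℝ}

theorem ConvexOnRatLines.le_of_eq_add_sum (hf : ConvexOnRatLines (transrationalPolyhedron A c) f)
    (ha : 0 ≤ a) (hb : 0 ≤ b) (hab : a + b = 1) {k : ℕ} {x y : κ → ℝ}
    (hx : x ∈ transrationalPolyhedron A c) (hy : y ∈ transrationalPolyhedron A c)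
    (lam : Fin k → ℝ) (q : Fin k → κ → ℚ) (hxy : y = x + ∑ l, lam l • ratVec (q l)) :
    f (a • x + b • y) ≤ a * f x + b * f y := by
  set P := transrationalPolyhedron A c
  subst hxy
  induction k generalizing x with
  | zero => simp [Convex.combo_self hab, ← add_mul, hab]
  | succ k ih =>
    rcases eq_or_ne lam 0 with rfl | hlam
    · simp [Convex.combo_self hab, ← add_mul, hab]
    set y := x + ∑ l, lam l • ratVec (q l)
    obtain ⟨β, hβ, hβ0⟩ : ∃ β : Fin (k + 1) → ℚ,
        (∀ᶠ s in 𝓝[≥] (0 : ℝ), y + s • ratVec (∑ l, β l • q l) ∈ P) ∧ ratVec β ≠ 0 := by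
      have hμ : y + ∑ l, (-lam) l • ratVec (q l) ∈ P := by simpa [y] using hx
      obtain ⟨_, ⟨β, hβ, rfl⟩, hdist⟩ := Metric.mem_closure_iff.1
        (mem_closure_ratVec_image_of_add_sum_mem hy q hμ) ‖lam‖ (norm_pos_iff.2 hlam)
      refine ⟨β, hβ, fun h0 => ?_⟩
      rw [h0, dist_zero_right, norm_neg] at hdist
      exact lt_irrefl _ hdist
    have hw := ratVec_sum_smul β q
    by_cases hpar : ∀ i j, lam i * ratVec β j = lam j * ratVec β i
    · obtain ⟨τ, hτ⟩ := exists_eq_smul_of_mul_eq_mul hβ0 hpar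
      have hyx : y = x + τ • ratVec (∑ l, β l • q l) := by
        simp [y, hw, hτ, Finset.smul_sum, smul_smul]
      rw [hyx] at hy ⊢
      exact hf.le_of_eq_add_smul hx hy ha hb hab
    push Not at hpar
    refine hf.le_of_mem_closure (convex_transrationalPolyhedron A c) hx hy
      (q := ∑ l, β l • q l) ha hb hab (mem_closure_iff_frequently.2 ?_)
    refine (((frequently_exists_sum_smul_ratVec_eq q hpar).and_eventually
      (hβ.filter_mono (nhdsWithin_mono _ Set.Ioi_subset_Ici_self))).filter_mono
        nhdsWithin_le_nhds).mono ?_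
    rintro s ⟨⟨μ, q', hμ⟩, hsP⟩
    have hy' : y + s • ratVec (∑ l, β l • q l) = x + ∑ l, μ l • ratVec (q' l) := by
      rw [← hμ, hw]
      simp [y, add_assoc, add_smul, Finset.sum_add_distrib, Finset.smul_sum, smul_smul]
    refine ⟨hsP, ?_⟩
    rw [hy'] at hsP ⊢
    exact ih μ q' hx hsP

end

/-- Lemma (`L:trp1 convex`): let `C ⊆ ℝⁿ` be a transrational polyhedral set
(finitely many half-spaces with integer slope vectors and real constants), and let
`f : C → ℝ` be convex transintegral polyhedral in dimension 1: for each `x ∈ C` and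
rational direction `a ∈ ℚⁿ`, on the interval `I = {t : x + ta ∈ C}` the function
`g(t) = f(x + ta)` is continuous, convex, and piecewise affine with finitely many
slopes, all lying in `a₁ℤ + ⋯ + aₙℤ` (encoded via its right derivatives, given for
a convex function by the infimum of forward difference quotients, taking values in
a finite set of such numbers).  Then `f` is convex on `C`. -/
theorem convex_of_dim_one_transintegral
    (n m : ℕ) (A : Fin m → Fin n → ℤ) (c : Fin m → ℝ)
    (C : Set (Fin n → ℝ))
    (hC : C = {x | ∀ i, 0 ≤ (∑ j, (A i j : ℝ) * x j) + c i})
    (f : (Fin n → ℝ) → ℝ)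
    (hdim1 : ∀ x ∈ C, ∀ a : Fin n → ℚ,
      ContinuousOn (fun t : ℝ => f (x + t • fun i => ((a i : ℝ))))
        {t : ℝ | (x + t • fun i => ((a i : ℝ))) ∈ C} ∧
      ConvexOn ℝ {t : ℝ | (x + t • fun i => ((a i : ℝ))) ∈ C}
        (fun t : ℝ => f (x + t • fun i => ((a i : ℝ)))) ∧
      ∃ S : Finset ℝ,
        (∀ s ∈ S, ∃ mv : Fin n → ℤ, s = ∑ i, (mv i : ℝ) * (a i : ℝ)) ∧
        ∀ t ∈ {t : ℝ | (x + t • fun i => ((a i : ℝ))) ∈ C},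
          (∃ t' ∈ {t : ℝ | (x + t • fun i => ((a i : ℝ))) ∈ C}, t < t') →
          sInf {q : ℝ | ∃ t' ∈ {t : ℝ | (x + t • fun i => ((a i : ℝ))) ∈ C},
              t < t' ∧ q = (f (x + t' • fun i => ((a i : ℝ))) -
                f (x + t • fun i => ((a i : ℝ)))) / (t' - t)} ∈ S) :
    ConvexOn ℝ C f := by
  have hf : ConvexOnRatLines C f := fun x hx q => ⟨(hdim1 x hx q).1, (hdim1 x hx q).2.1⟩
  have hP : C = transrationalPolyhedron (Matrix.of fun i j => (A i j : ℚ)) c := by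
    rw [hC]
    ext x
    simp [transrationalPolyhedron, Matrix.mulVec, dotProduct]
  subst hP
  refine ⟨convex_transrationalPolyhedron _ _, fun x hx y hy a b ha hb hab => ?_⟩
  refine hf.le_of_eq_add_sum ha hb hab hx hy (fun l => y l - x l) (fun l => Pi.single l 1) ?_
  ext j
  simp [Pi.single_apply, apply_ite (Rat.cast : ℚ → ℝ)]
end Polyhedron
end
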